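/- arXiv:math/0506319 — 8 statements merged into one kernel-verified Lean document; each statement's English description precedes it below -/
import Mathlib

section
/- For any real u > 0 and complex s with Re(s) > 1, the Hurwitz-type Lerch series at z = 1 satisfies the integral representation: the sum over k ≥ 0 of (u+k)^(-s) equals (1/Γ(s)) times the integral from 0 to ∞ of e^(-(u-1)t)/(e^t - 1) · t^(s-1) dt. -/
open MeasureTheory

theorem lerch_integral_z_one (u : ℝ) (hu : 0 < u) (s : ℂ) (hs : 1 < s.re) :
    ∑' k : ℕ, ((u + k : ℝ) : ℂ) ^ (-s) =
      (Complex.Gamma s)⁻¹ *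
        ∫ t in Set.Ioi (0 : ℝ),
          Complex.exp (-(((u : ℂ) - 1)) * t) / (Complex.exp t - 1) * (t : ℂ) ^ (s - 1) := by
  have hs0 : 0 < s.re := lt_trans one_pos hs
  set F : ℝ → ℂ := fun t => Complex.exp (-(((u : ℂ) - 1)) * t) / (Complex.exp t - 1) with hF
  have hp : ∀ k : ℕ, (1 : ℂ) = 0 ∨ 0 < u + k := fun k => Or.inr (by positivity)
  have hFsum : ∀ t ∈ Set.Ioi (0 : ℝ),
      HasSum (fun k : ℕ => (1 : ℂ) * Real.exp (-(u + k) * t)) (F t) := by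
    intro t ht
    simp only [Set.mem_Ioi] at ht
    have hr : Real.exp (-t) < 1 := Real.exp_lt_one_iff.mpr (by linarith)
    have hgeo : HasSum (fun k : ℕ => (Real.exp (-t)) ^ k * Real.exp (-(u * t)))
        ((1 - Real.exp (-t))⁻¹ * Real.exp (-(u * t))) :=
      (hasSum_geometric_of_lt_one (Real.exp_nonneg _) hr).mul_right _
    have := (Complex.ofRealCLM.hasSum hgeo)
    convert this.congr_fun ?_ using 1
    · -- value equality
      have h1 : (Complex.exp t - 1) ≠ 0 := by
        intro h
        have : Complex.exp (t : ℂ) = 1 := by linear_combination h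
        obtain ⟨n, hn⟩ := Complex.exp_eq_one_iff.mp this
        have : (t : ℂ).im = (↑n * (2 * ↑Real.pi * Complex.I)).im := by rw [hn]
        simp [Complex.ofReal_im] at this
        rcases this with h | h
        · simp at hn; exact absurd hn (by exact_mod_cast ht.ne')
      have h2 : (1 : ℂ) - Complex.exp (-(t:ℂ)) ≠ 0 := by
        rw [sub_ne_zero, ← Complex.ofReal_neg, ← Complex.ofReal_exp]
        exact_mod_cast hr.ne'
      rw [hF, Complex.ofRealCLM_apply]
      push_cast [Complex.ofReal_exp]
      rw [inv_mul_eq_div, div_eq_div_iff h1 h2]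
      simp only [mul_sub, mul_one, sub_mul, one_mul, ← Complex.exp_add]
      ring_nf
    · intro k
      rw [Complex.ofRealCLM_apply, Complex.ofReal_exp]
      push_cast [Complex.ofReal_exp, ← Complex.exp_nat_mul, ← Complex.exp_add]
      ring
  have h_sum : Summable fun k : ℕ => ‖(1 : ℂ)‖ / (u + k) ^ s.re := by
    simp only [norm_one]
    have := (Real.summable_one_div_nat_add_rpow u s.re).mpr hs
    refine this.congr fun k => ?_
    rw [abs_of_pos (by positivity : (0:ℝ) < k + u), add_comm]
  have key := hasSum_mellin (F := F) (p := fun k : ℕ => u + k) (a := fun _ => 1) hp hs0 hFsum h_sum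
  have htsum : ∑' k : ℕ, ((u + k : ℝ) : ℂ) ^ (-s)
      = (Complex.Gamma s)⁻¹ * mellin F s := by
    rw [← key.tsum_eq, ← tsum_mul_left]
    congr 1
    ext k
    rw [Complex.cpow_neg]
    have : ((u + k : ℝ) : ℂ) ≠ 0 := by
      exact_mod_cast (by positivity : (0:ℝ) < u + k).ne'
    have hG : Complex.Gamma s ≠ 0 := Complex.Gamma_ne_zero_of_re_pos hs0
    field_simp
  rw [htsum]
  congr 1
  rw [mellin]
  refine setIntegral_congr_fun measurableSet_Ioi fun t ht => ?_
  rw [smul_eq_mul, mul_comm]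
end

section
/- For any real u > 0 and complex s and z with |z| < 1 and Re(s) > 0, the Lerch transcendent Φ(z,s,u) = ∑_{k=0}^∞ z^k/(u+k)^s equals (1/Γ(s)) ∫_0^∞ e^(-(u-1)t)/(e^t - z) · t^(s-1) dt. -/
open MeasureTheory

theorem lerch_integral (u : ℝ) (hu : 0 < u) (z : ℂ) (hz : ‖z‖ < 1)
    (s : ℂ) (hs : 0 < s.re) :
    ∑' k : ℕ, z ^ k / ((u + k : ℝ) : ℂ) ^ s =
      (Complex.Gamma s)⁻¹ *
        ∫ t in Set.Ioi (0 : ℝ),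
          Complex.exp (-(((u : ℂ) - 1)) * t) / (Complex.exp t - z) * (t : ℂ) ^ (s - 1) := by
  have hp : ∀ k : ℕ, z ^ k = 0 ∨ 0 < u + (k : ℝ) := fun k => Or.inr (by positivity)
  set F : ℝ → ℂ := fun t => Complex.exp (-(((u : ℂ) - 1)) * t) / (Complex.exp t - z) with hF_def
  have hF : ∀ t ∈ Set.Ioi (0 : ℝ),
      HasSum (fun k : ℕ => z ^ k * Real.exp (-(u + (k : ℝ)) * t)) (F t) := by
    intro t ht
    rw [Set.mem_Ioi] at ht
    have hlt : ‖z * Complex.exp (-t)‖ < 1 := by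
      rw [norm_mul, Complex.norm_exp]
      simp only [Complex.neg_re, Complex.ofReal_re]
      calc ‖z‖ * Real.exp (-t) ≤ 1 * Real.exp (-t) := by
            apply mul_le_mul_of_nonneg_right hz.le (Real.exp_nonneg _)
        _ = Real.exp (-t) := one_mul _
        _ < 1 := by rw [Real.exp_lt_one_iff]; linarith
    have hgeo := hasSum_geometric_of_norm_lt_one hlt
    have hne : (1 : ℂ) - z * Complex.exp (-t) ≠ 0 := by
      intro h
      have : ‖z * Complex.exp (-t)‖ = 1 := by
        have : z * Complex.exp (-t) = 1 := by linear_combination -h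
        rw [this]; simp
      linarith
    have h2 := hgeo.mul_left (Complex.exp (-(u : ℂ) * t))
    have hne2 : Complex.exp (t : ℂ) - z ≠ 0 := by
      intro h
      have h3 : ‖Complex.exp (t : ℂ)‖ = ‖z‖ := by
        rw [sub_eq_zero] at h; rw [h]
      rw [Complex.norm_exp] at h3
      simp only [Complex.ofReal_re] at h3
      have h1 := Real.add_one_le_exp t
      linarith
    convert h2 using 2 with k
    · rfl
    · rw [mul_pow, ← Complex.exp_nat_mul]
      push_cast
      conv_rhs => rw [mul_left_comm]
      rw [← Complex.exp_add]
      congr 2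
      ring
    · show Complex.exp (-((u : ℂ) - 1) * t) / (Complex.exp t - z) = _
      have e1 : Complex.exp (-((u : ℂ) - 1) * t) =
          Complex.exp (-(u : ℂ) * t) * Complex.exp (t : ℂ) := by
        rw [← Complex.exp_add]; congr 1; ring
      have e2 : (1 : ℂ) - z * Complex.exp (-(t : ℂ)) =
          Complex.exp (-(t : ℂ)) * (Complex.exp (t : ℂ) - z) := by
        rw [mul_sub, ← Complex.exp_add, neg_add_cancel, Complex.exp_zero]; ring
      rw [e1, e2, mul_inv, Complex.exp_neg, inv_inv]
      field_simp
  have h_sum : Summable fun k : ℕ => ‖z ^ k‖ / (u + (k : ℝ)) ^ s.re := by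
    apply Summable.of_nonneg_of_le (fun k => by positivity)
      (fun k => ?_) ((summable_geometric_of_lt_one (norm_nonneg z) hz).mul_right (u ^ s.re)⁻¹)
    rw [norm_pow, div_eq_mul_inv]
    apply mul_le_mul_of_nonneg_left _ (by positivity)
    rw [inv_le_inv₀ (by positivity) (by positivity)]
    exact Real.rpow_le_rpow hu.le (by simp) hs.le
  have key := hasSum_mellin hp hs hF h_sum
  have hG : Complex.Gamma s ≠ 0 := Complex.Gamma_ne_zero_of_re_pos hs
  have key2 : HasSum (fun k : ℕ => z ^ k / ((u + k : ℝ) : ℂ) ^ s)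
      ((Complex.Gamma s)⁻¹ * mellin F s) := by
    have := key.mul_left (Complex.Gamma s)⁻¹
    convert this using 2 with k
    · rfl
    rw [← mul_div_assoc, ← mul_assoc, inv_mul_cancel₀ hG, one_mul]
  rw [key2.tsum_eq]
  congr 1
  rw [mellin]
  apply setIntegral_congr_fun measurableSet_Ioi
  intro t ht
  simp only [hF_def, smul_eq_mul]
  ring
end

section
/- For every complex s with Re(s) > 1, ζ(s) = (1/(1−2^(1−s))) · ∑_{n=0}^∞ 2^(−n−1) · ∑_{k=0}^n (−1)^k C(n,k) (k+1)^(−s). -/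
open Finset Real

/-- Crude exponential bound on binomial coefficients. -/
lemma hasse_choose_le (n k : ℕ) : (n.choose k : ℝ) ≤ 3 ^ k * (4 / 3) ^ n := by
  rcases le_or_gt k n with h | h
  · have hpow : ((4 : ℝ) / 3) ^ n = ∑ j ∈ range (n + 1), (1 / 3 : ℝ) ^ j * 1 ^ (n - j) * n.choose j := by
      rw [← add_pow]; norm_num
    have hterm : (1 / 3 : ℝ) ^ k * 1 ^ (n - k) * n.choose k ≤ (4 / 3) ^ n := by
      rw [hpow]
      exact Finset.single_le_sum (f := fun j => (1 / 3 : ℝ) ^ j * 1 ^ (n - j) * n.choose j)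
        (fun j _ => by positivity) (mem_range.mpr (by omega))
    have : (1 / 3 : ℝ) ^ k * n.choose k ≤ (4 / 3) ^ n := by simpa using hterm
    calc (n.choose k : ℝ) = 3 ^ k * ((1 / 3 : ℝ) ^ k * n.choose k) := by
          rw [← mul_assoc, ← mul_pow]; norm_num
      _ ≤ 3 ^ k * (4 / 3) ^ n := by
          exact mul_le_mul_of_nonneg_left this (by positivity)
  · simp [Nat.choose_eq_zero_of_lt h]; positivity

lemma hasse_q_nonneg : (0 : ℝ) ≤ (3 : ℝ) ^ ((4 : ℝ)⁻¹) * (2 / 3) := by positivity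

lemma hasse_q_lt_one : (3 : ℝ) ^ ((4 : ℝ)⁻¹) * (2 / 3) < 1 := by
  have h34 : ((3 : ℝ) ^ ((4 : ℝ)⁻¹)) < 3 / 2 := by
    have h4 : ((3 : ℝ) ^ ((4 : ℝ)⁻¹)) ^ (4 : ℕ) = 3 := by
      rw [← Real.rpow_natCast ((3:ℝ) ^ ((4:ℝ)⁻¹)) 4, ← Real.rpow_mul (by norm_num)]
      norm_num
    by_contra hc
    push_neg at hc
    have := pow_le_pow_left₀ (by norm_num : (0:ℝ) ≤ 3/2) hc 4
    rw [h4] at this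
    norm_num at this
  nlinarith [Real.rpow_nonneg (by norm_num : (0:ℝ) ≤ 3) ((4:ℝ)⁻¹)]

lemma hasse_row_bound {σ : ℝ} (hσ : 1 < σ) (n : ℕ) :
    ∑ k ∈ range (n + 1), (2⁻¹ : ℝ) ^ (n + 1) * n.choose k * ((k : ℝ) + 1) ^ (-σ) ≤
      ((n : ℝ) + 1) * ((3 : ℝ) ^ ((4 : ℝ)⁻¹) * (2 / 3)) ^ n + (4 : ℝ) ^ σ * (n : ℝ) ^ (-σ) := by
  set q : ℝ := (3 : ℝ) ^ ((4 : ℝ)⁻¹) * (2 / 3) with hq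
  rcases Nat.eq_zero_or_pos n with rfl | hn
  · simp [Real.zero_rpow (by linarith : -σ ≠ 0), Real.one_rpow]
    norm_num
  · have key : ∀ k ∈ range (n + 1),
        (2⁻¹ : ℝ) ^ (n + 1) * n.choose k * ((k : ℝ) + 1) ^ (-σ) ≤
          q ^ n / 2 + (2⁻¹ : ℝ) ^ (n + 1) * n.choose k * ((4 : ℝ) ^ σ * (n : ℝ) ^ (-σ)) := by
      intro k _
      rcases le_or_gt (4 * (k + 1)) n with h4 | h4
      · have h1 : ((k : ℝ) + 1) ^ (-σ) ≤ 1 :=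
          Real.rpow_le_one_of_one_le_of_nonpos (by linarith [Nat.cast_nonneg (α := ℝ) k]) (by linarith)
        have h2 : (n.choose k : ℝ) ≤ 3 ^ k * (4 / 3) ^ n := hasse_choose_le n k
        have h3 : (3 : ℝ) ^ k ≤ ((3 : ℝ) ^ ((4 : ℝ)⁻¹)) ^ n := by
          rw [← Real.rpow_natCast (3 : ℝ) k, ← Real.rpow_natCast ((3:ℝ) ^ ((4:ℝ)⁻¹)) n,
            ← Real.rpow_mul (by norm_num)]
          refine Real.rpow_le_rpow_of_exponent_le (by norm_num) ?_
          have hc : (4 : ℝ) * ((k : ℝ) + 1) ≤ n := by exact_mod_cast h4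
          linarith
        have step : (2⁻¹ : ℝ) ^ (n + 1) * n.choose k * ((k : ℝ) + 1) ^ (-σ) ≤ q ^ n / 2 := by
          calc (2⁻¹ : ℝ) ^ (n + 1) * n.choose k * ((k : ℝ) + 1) ^ (-σ)
              ≤ (2⁻¹ : ℝ) ^ (n + 1) * n.choose k * 1 := by
                have hnn : (0:ℝ) ≤ (2⁻¹ : ℝ) ^ (n + 1) * n.choose k := by positivity
                exact mul_le_mul_of_nonneg_left h1 hnn
            _ = (2⁻¹ : ℝ) ^ (n + 1) * n.choose k := by ring
            _ ≤ (2⁻¹ : ℝ) ^ (n + 1) * (((3:ℝ) ^ ((4:ℝ)⁻¹)) ^ n * (4 / 3) ^ n) := by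
                refine mul_le_mul_of_nonneg_left (h2.trans ?_) (by positivity)
                exact mul_le_mul_of_nonneg_right h3 (by positivity)
            _ = q ^ n / 2 := by
                rw [hq, mul_pow, pow_succ, show ((2:ℝ)/3) = 2⁻¹ * (4/3) by norm_num, mul_pow]
                ring
        refine step.trans (le_add_of_nonneg_right (by positivity))
      · have hn4 : (0 : ℝ) < (n : ℝ) / 4 := by positivity
        have hle : (n : ℝ) / 4 ≤ (k : ℝ) + 1 := by
          have : (n : ℝ) ≤ 4 * ((k : ℝ) + 1) := by exact_mod_cast h4.le
          linarith
        have h1 : ((k : ℝ) + 1) ^ (-σ) ≤ ((n : ℝ) / 4) ^ (-σ) :=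
          Real.rpow_le_rpow_of_nonpos hn4 hle (by linarith)
        have h2 : ((n : ℝ) / 4) ^ (-σ) = (4 : ℝ) ^ σ * (n : ℝ) ^ (-σ) := by
          rw [Real.div_rpow (by positivity) (by norm_num), Real.rpow_neg (by norm_num : (0:ℝ) ≤ 4),
            div_eq_mul_inv, inv_inv]
          ring
        have step : (2⁻¹ : ℝ) ^ (n + 1) * n.choose k * ((k : ℝ) + 1) ^ (-σ) ≤
            (2⁻¹ : ℝ) ^ (n + 1) * n.choose k * ((4 : ℝ) ^ σ * (n : ℝ) ^ (-σ)) := by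
          refine mul_le_mul_of_nonneg_left (h1.trans_eq h2) (by positivity)
        refine step.trans (le_add_of_nonneg_left (by positivity))
    refine (Finset.sum_le_sum key).trans ?_
    rw [Finset.sum_add_distrib, Finset.sum_const, Finset.card_range, nsmul_eq_mul]
    have e1 : (↑(n + 1) : ℝ) * (q ^ n / 2) ≤ ((n : ℝ) + 1) * q ^ n := by
      have hq0 : (0 : ℝ) ≤ q ^ n := by positivity
      push_cast
      nlinarith
    have e2 : ∑ k ∈ range (n + 1), (2⁻¹ : ℝ) ^ (n + 1) * n.choose k * ((4:ℝ) ^ σ * (n:ℝ) ^ (-σ)) ≤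
        (4 : ℝ) ^ σ * (n : ℝ) ^ (-σ) := by
      have hs : ∑ k ∈ range (n + 1), (2⁻¹ : ℝ) ^ (n + 1) * n.choose k * ((4:ℝ) ^ σ * (n:ℝ) ^ (-σ))
          = (2⁻¹ : ℝ) ^ (n + 1) * (2 : ℝ) ^ n * ((4:ℝ) ^ σ * (n:ℝ) ^ (-σ)) := by
        rw [← Finset.sum_mul, ← Finset.mul_sum]
        congr 2
        rw [← Nat.cast_sum, Nat.sum_range_choose]
        push_cast; ring
      have h2n : (2⁻¹:ℝ) ^ (n+1) * 2 ^ n = 2⁻¹ := by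
        rw [pow_succ, mul_right_comm, ← mul_pow]; norm_num
      rw [hs, h2n]
      nlinarith [mul_nonneg (Real.rpow_nonneg (by norm_num : (0:ℝ) ≤ 4) σ)
        (Real.rpow_nonneg (Nat.cast_nonneg n) (-σ))]
    linarith

lemma hasse_bound_summable {σ : ℝ} (hσ : 1 < σ) :
    Summable (fun n : ℕ => ((n : ℝ) + 1) * ((3:ℝ) ^ ((4:ℝ)⁻¹) * (2/3)) ^ n
      + (4:ℝ) ^ σ * (n:ℝ) ^ (-σ)) := by
  have hq1 : ‖(3:ℝ) ^ ((4:ℝ)⁻¹) * (2/3)‖ < 1 := by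
    rw [Real.norm_eq_abs, abs_of_nonneg hasse_q_nonneg]; exact hasse_q_lt_one
  have h1 : Summable fun n : ℕ => ((n:ℝ) + 1) * ((3:ℝ) ^ ((4:ℝ)⁻¹) * (2/3)) ^ n := by
    have ha := summable_pow_mul_geometric_of_norm_lt_one 1 hq1
    have hb := summable_geometric_of_norm_lt_one hq1
    refine (ha.add hb).congr fun n => ?_
    ring
  have h2 : Summable fun n : ℕ => (4:ℝ)^σ * (n:ℝ) ^ (-σ) :=
    (Real.summable_nat_rpow.mpr (by linarith)).mul_left _
  exact h1.add h2

open Complex in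
lemma hasse_ne (s : ℂ) (hs : 1 < s.re) : (1:ℂ) - 2 ^ ((1:ℂ) - s) ≠ 0 := by
  intro h
  have habs : ‖(2:ℂ) ^ ((1:ℂ) - s)‖ = 1 := by
    rw [sub_eq_zero] at h; rw [← h]; simp
  have h2 : ‖(2:ℂ) ^ ((1:ℂ) - s)‖ = (2:ℝ) ^ (((1:ℂ) - s).re) := by
    rw [show (2:ℂ) = ((2:ℝ):ℂ) by norm_num]
    exact Complex.norm_cpow_eq_rpow_re_of_pos (by norm_num) _
  have hlt : (2:ℝ) ^ (((1:ℂ) - s).re) < 1 := by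
    apply Real.rpow_lt_one_of_one_lt_of_neg (by norm_num)
    simp only [Complex.sub_re, Complex.one_re]; linarith
  rw [h2] at habs; linarith

open Complex in
lemma hasse_eta (s : ℂ) (hs : 1 < s.re) :
    HasSum (fun k : ℕ => (-1) ^ k * ((k : ℂ) + 1) ^ (-s))
      ((1 - 2 ^ ((1:ℂ) - s)) * riemannZeta s) := by
  set a : ℕ → ℂ := fun k => ((k : ℂ) + 1) ^ (-s) with ha
  have hsum : Summable a := by
    have h1 : Summable (fun n : ℕ => 1 / (n : ℂ) ^ s) := Complex.summable_one_div_nat_cpow.mpr hs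
    have h2 : Summable (fun n : ℕ => 1 / ((n : ℂ) + 1) ^ s) := by
      have h3 := (summable_nat_add_iff (f := fun n : ℕ => 1 / (n : ℂ) ^ s) 1).mpr h1
      refine h3.congr fun k => ?_
      push_cast; ring_nf
    refine h2.congr fun k => ?_
    show 1 / ((k:ℂ) + 1) ^ s = ((k:ℂ) + 1) ^ (-s)
    rw [cpow_neg, one_div]
  have hz : HasSum a (riemannZeta s) := by
    have h := hsum.hasSum
    have he : ∑' k, a k = riemannZeta s := by
      rw [zeta_eq_tsum_one_div_nat_add_one_cpow hs]
      refine tsum_congr fun k => ?_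
      show ((k:ℂ) + 1) ^ (-s) = 1 / ((k:ℂ) + 1) ^ s
      rw [cpow_neg, one_div]
    rwa [he] at h
  have hodd : ∀ k : ℕ, a (2 * k + 1) = 2 ^ (-s) * a k := by
    intro k
    show (((2 * k + 1 : ℕ) : ℂ) + 1) ^ (-s) = 2 ^ (-s) * ((k : ℂ) + 1) ^ (-s)
    have h2 : ((2 * k + 1 : ℕ) : ℂ) + 1 = ((2:ℝ):ℂ) * ((((k:ℝ) + 1) : ℝ):ℂ) := by
      push_cast; ring
    rw [h2, mul_cpow_ofReal_nonneg (by norm_num) (by positivity)]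
    norm_num
  have hoddsum : HasSum (fun k => a (2 * k + 1)) (2 ^ (-s) * riemannZeta s) := by
    have h := hz.mul_left ((2:ℂ) ^ (-s))
    exact h.congr_fun fun k => hodd k
  have heS : Summable (fun k => a (2 * k)) :=
    hsum.comp_injective (mul_right_injective₀ two_ne_zero)
  have heven : HasSum (fun k => a (2 * k)) (∑' k, a (2 * k)) := heS.hasSum
  have hE : ∑' k, a (2 * k) = riemannZeta s - 2 ^ (-s) * riemannZeta s := by
    have h := (heven.even_add_odd hoddsum).unique hz
    linear_combination h
  rw [hE] at heven
  have goal1 : HasSum (fun k : ℕ => (-1:ℂ) ^ k * a k)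
      ((riemannZeta s - 2 ^ (-s) * riemannZeta s) + (-(2 ^ (-s) * riemannZeta s))) := by
    refine HasSum.even_add_odd ?_ ?_
    · refine heven.congr_fun fun k => ?_
      simp [pow_mul]
    · refine hoddsum.neg.congr_fun fun k => ?_
      simp [pow_succ, pow_mul]
  have h21 : (2:ℂ) ^ ((1:ℂ) - s) = 2 * 2 ^ (-s) := by
    rw [sub_eq_add_neg, cpow_add _ _ two_ne_zero, cpow_one]
  have hval : (1 - 2 ^ ((1:ℂ) - s)) * riemannZeta s
      = (riemannZeta s - 2 ^ (-s) * riemannZeta s) + (-(2 ^ (-s) * riemannZeta s)) := by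
    rw [h21]; ring
  rw [hval]
  exact goal1

theorem zeta_hasse_series (s : ℂ) (hs : 1 < s.re) :
    riemannZeta s = (1 - 2 ^ ((1 : ℂ) - s))⁻¹ *
      ∑' n : ℕ, (2 : ℂ) ^ (-(n : ℂ) - 1) *
        ∑ k ∈ Finset.range (n + 1),
          (-1 : ℂ) ^ k * (n.choose k : ℂ) * ((k : ℂ) + 1) ^ (-s) := by
  classical
  set a : ℕ → ℂ := fun k => ((k : ℂ) + 1) ^ (-s) with ha
  set F : ℕ → ℕ → ℂ := fun n k =>
    if k ≤ n then (2⁻¹:ℂ) ^ (n+1) * ((-1:ℂ) ^ k * (n.choose k : ℂ) * a k) else 0 with hF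
  have hna : ∀ k : ℕ, ‖a k‖ = ((k:ℝ) + 1) ^ (-s.re) := by
    intro k
    show ‖((k : ℂ) + 1) ^ (-s)‖ = _
    have h1 : ((k:ℂ) + 1) = ((((k:ℝ) + 1) : ℝ) : ℂ) := by push_cast; ring
    rw [h1, Complex.norm_cpow_eq_rpow_re_of_pos (by positivity),
      Complex.neg_re]
  have hnF : ∀ n k : ℕ, ‖F n k‖ =
      (if k ≤ n then (2⁻¹:ℝ) ^ (n+1) * (n.choose k : ℝ) * ((k:ℝ) + 1) ^ (-s.re) else 0) := by
    intro n k
    show ‖if k ≤ n then (2⁻¹:ℂ) ^ (n+1) * ((-1:ℂ) ^ k * (n.choose k : ℂ) * a k) else 0‖ = _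
    split
    · rw [norm_mul, norm_mul, norm_mul, norm_pow, norm_pow, hna]
      simp [Complex.norm_natCast]
      ring
    · simp
  have hFsumnorm : Summable (fun p : ℕ × ℕ => ‖F p.1 p.2‖) := by
    rw [summable_prod_of_nonneg (fun p => norm_nonneg _)]
    constructor
    · intro n
      apply summable_of_ne_finset_zero (s := Finset.range (n+1))
      intro k hk
      rw [hnF, if_neg]
      simp only [Finset.mem_range] at hk; omega
    · have hrow : ∀ n : ℕ, ∑' k, ‖F n k‖ =
          ∑ k ∈ Finset.range (n+1), (2⁻¹:ℝ) ^ (n+1) * (n.choose k : ℝ) * ((k:ℝ)+1) ^ (-s.re) := by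
        intro n
        rw [tsum_eq_sum (s := Finset.range (n+1))
          (fun k hk => by rw [hnF, if_neg]; simp only [Finset.mem_range] at hk; omega)]
        exact Finset.sum_congr rfl fun k hk => by
          rw [hnF, if_pos (by simp only [Finset.mem_range] at hk; omega)]
      refine Summable.of_nonneg_of_le (fun n => ?_) (fun n => ?_) (hasse_bound_summable hs)
      · rw [hrow]
        exact Finset.sum_nonneg fun k _ => by positivity
      · rw [hrow]
        exact hasse_row_bound hs n
  have hFsum : Summable (Function.uncurry F) := Summable.of_norm hFsumnorm
  have hcol : ∀ k : ℕ, HasSum (fun n => F n k) ((-1:ℂ) ^ k * a k) := by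
    intro k
    have hr : ‖(2⁻¹ : ℂ)‖ < 1 := by
      rw [norm_inv]; simp; norm_num
    have h1 := hasSum_choose_mul_geometric_of_norm_lt_one (𝕜 := ℂ) k hr
    have h2 := h1.mul_left ((2⁻¹:ℂ) ^ (k+1))
    have hval : (2⁻¹:ℂ) ^ (k+1) * (1 / (1 - 2⁻¹) ^ (k+1)) = 1 := by
      rw [show ((1:ℂ) - 2⁻¹) = 2⁻¹ by norm_num]
      field_simp
    rw [hval] at h2
    set g : ℕ → ℂ := fun n => if k ≤ n then ((n.choose k : ℂ)) * (2⁻¹:ℂ) ^ (n+1) else 0 with hg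
    have hgsum : HasSum g 1 := by
      refine (hasSum_nat_add_iff' (f := g) k).mp ?_
      have hzero : ∑ i ∈ Finset.range k, g i = 0 :=
        Finset.sum_eq_zero fun i hi => by
          show (if k ≤ i then _ else 0) = 0
          rw [if_neg]; simp only [Finset.mem_range] at hi; omega
      rw [hzero, sub_zero]
      refine h2.congr_fun fun m => ?_
      show (if k ≤ m + k then ((m+k).choose k : ℂ) * (2⁻¹:ℂ) ^ (m+k+1) else 0) = _
      rw [if_pos (Nat.le_add_left k m), show m + k + 1 = m + (k+1) by omega, pow_add]
      ring
    have h3 := hgsum.mul_right ((-1:ℂ) ^ k * a k)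
    rw [one_mul] at h3
    refine h3.congr_fun fun n => ?_
    show F n k = g n * _
    rw [hF, hg]
    simp only []
    split
    · ring
    · rw [zero_mul]
  have hterm : ∀ n : ℕ, (2:ℂ) ^ (-(n:ℂ) - 1) *
      ∑ k ∈ Finset.range (n+1), (-1:ℂ) ^ k * (n.choose k : ℂ) * a k = ∑' k, F n k := by
    intro n
    have hp : (2:ℂ) ^ (-(n:ℂ) - 1) = (2⁻¹:ℂ) ^ (n+1) := by
      rw [show (-(n:ℂ) - 1) = -(((n+1 : ℕ)):ℂ) by push_cast; ring,
        Complex.cpow_neg, Complex.cpow_natCast, inv_pow]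
    rw [hp, Finset.mul_sum,
      tsum_eq_sum (s := Finset.range (n+1))
        (fun k hk => by rw [hF]; simp only []; rw [if_neg]
                        simp only [Finset.mem_range] at hk; omega)]
    refine Finset.sum_congr rfl fun k hk => ?_
    rw [hF]; simp only []
    rw [if_pos (by simp only [Finset.mem_range] at hk; omega)]
  have hS : (∑' n : ℕ, (2:ℂ) ^ (-(n:ℂ) - 1) *
      ∑ k ∈ Finset.range (n+1), (-1:ℂ) ^ k * (n.choose k : ℂ) * a k)
      = (1 - 2 ^ ((1:ℂ) - s)) * riemannZeta s := by
    calc (∑' n : ℕ, (2:ℂ) ^ (-(n:ℂ) - 1) *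
        ∑ k ∈ Finset.range (n+1), (-1:ℂ) ^ k * (n.choose k : ℂ) * a k)
        = ∑' n, ∑' k, F n k := tsum_congr hterm
      _ = ∑' k, ∑' n, F n k := (Summable.tsum_comm (f := F) hFsum).symm
      _ = ∑' k, (-1:ℂ) ^ k * a k := tsum_congr fun k => (hcol k).tsum_eq
      _ = (1 - 2 ^ ((1:ℂ) - s)) * riemannZeta s := (hasse_eta s hs).tsum_eq
  rw [hS, ← mul_assoc, inv_mul_cancel₀ (hasse_ne s hs), one_mul]
end

section
/- For real u > 0, complex z with |z| < 1, and real s > 0, ∫_0^1 ∫_0^1 (xy)^(u−1) (−ln(xy))^s / (1 − xyz) dx dy = Γ(s+2) · ∑_{k=0}^∞ z^k/(u+k)^(s+2). -/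
open MeasureTheory Real Set Filter intervalIntegral Topology

/-! Auxiliary lemmas -/

lemma image_exp_neg : (fun t : ℝ => Real.exp (-t)) '' Set.Ioi 0 = Set.Ioo 0 1 := by
  ext w
  constructor
  · rintro ⟨t, ht, rfl⟩
    exact ⟨Real.exp_pos _, by rw [Real.exp_lt_one_iff]; linarith [mem_Ioi.mp ht]⟩
  · rintro ⟨h0, h1⟩
    exact ⟨-Real.log w, by simpa using Real.log_neg h0 h1, by simp [Real.exp_log h0]⟩

lemma hasDeriv_exp_neg (t : ℝ) :
    HasDerivAt (fun t : ℝ => Real.exp (-t)) (-Real.exp (-t)) t := by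
  have h := ((Real.hasDerivAt_exp (-t)).comp t (hasDerivAt_neg t))
  simp only [mul_neg, mul_one] at h
  exact h

lemma injOn_exp_neg : Set.InjOn (fun t : ℝ => Real.exp (-t)) (Set.Ioi 0) := by
  intro a _ b _ h
  simpa using Real.exp_injective h

lemma cov_eq {a p : ℝ} (t : ℝ) (ht : t ∈ Set.Ioi (0:ℝ)) :
    |(-Real.exp (-t))| •
      (Real.exp (-t) ^ (a-1) * (-Real.log (Real.exp (-t))) ^ p)
      = t ^ p * Real.exp (-(a*t)) := by
  have ht' : (0:ℝ) < t := ht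
  rw [abs_neg, abs_of_pos (Real.exp_pos _), Real.log_exp, neg_neg, smul_eq_mul,
    Real.rpow_def_of_pos (Real.exp_pos _), Real.log_exp]
  rw [show Real.exp (-t) * (Real.exp (-t*(a-1)) * t^p)
      = t^p * (Real.exp (-t) * Real.exp (-t*(a-1))) by ring, ← Real.exp_add]
  congr 1
  ring

lemma integrableOn_rpow_exp {a p : ℝ} (ha : 0 < a) (hp : 0 < p) :
    IntegrableOn (fun t : ℝ => t ^ p * Real.exp (-(a*t))) (Set.Ioi 0) := by
  have h0 := Real.GammaIntegral_convergent (by linarith : (0:ℝ) < p + 1)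
  have h1 : IntegrableOn (fun t : ℝ => Real.exp (-(a*t)) * (a*t) ^ (p+1-1)) (Set.Ioi 0) := by
    have := (integrableOn_Ioi_comp_mul_left_iff
      (fun x : ℝ => Real.exp (-x) * x ^ (p+1-1)) 0 ha).mpr (by simpa using h0)
    simpa using this
  refine IntegrableOn.congr_fun (h1.const_mul (a ^ p)⁻¹) (fun t ht => ?_) measurableSet_Ioi
  have ht' : (0:ℝ) < t := ht
  rw [add_sub_cancel_right, Real.mul_rpow ha.le ht'.le]
  have hap : (0:ℝ) < a ^ p := Real.rpow_pos_of_pos ha p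
  field_simp

lemma integrableOn_rpow_log {a p : ℝ} (ha : 0 < a) (hp : 0 < p) :
    IntegrableOn (fun w : ℝ => w ^ (a-1) * (-Real.log w) ^ p) (Set.Ioo 0 1) := by
  rw [← image_exp_neg,
    integrableOn_image_iff_integrableOn_abs_deriv_smul measurableSet_Ioi
      (fun t _ => (hasDeriv_exp_neg t).hasDerivWithinAt) injOn_exp_neg]
  exact (integrableOn_rpow_exp ha hp).congr_fun
    (fun t ht => (cov_eq t ht).symm) measurableSet_Ioi

lemma integral_rpow_log {a p : ℝ} (ha : 0 < a) (hp : 0 < p) :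
    ∫ w in Set.Ioo (0:ℝ) 1, w ^ (a-1) * (-Real.log w) ^ p
      = (1/a) ^ (p+1) * Real.Gamma (p+1) := by
  rw [← image_exp_neg,
    integral_image_eq_integral_abs_deriv_smul measurableSet_Ioi
      (fun t _ => (hasDeriv_exp_neg t).hasDerivWithinAt) injOn_exp_neg]
  rw [← integral_rpow_mul_exp_neg_mul_Ioi (by linarith : (0:ℝ) < p + 1) ha]
  refine setIntegral_congr_fun measurableSet_Ioi (fun t ht => ?_)
  rw [cov_eq t ht, add_sub_cancel_right]

noncomputable def Fc (u : ℝ) (z : ℂ) (s : ℝ) (w : ℝ) : ℂ :=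
  ((w ^ (u - 1) : ℝ) : ℂ) * (((-Real.log w) ^ s : ℝ) : ℂ) / (1 - (w:ℂ) * z)

lemma rpow_mul_exp_le {s c t : ℝ} (hs : 0 < s) (hc : 0 < c) (ht : 0 < t) :
    t ^ s * Real.exp (-(c*t)) ≤ (s/c) ^ s * Real.exp (-s) := by
  have hsc : (0:ℝ) < s/c := by positivity
  have h1 : Real.log (t*c/s) ≤ t*c/s - 1 := Real.log_le_sub_one_of_pos (by positivity)
  have h2 : Real.log t = Real.log (t*c/s) + Real.log (s/c) := by
    rw [← Real.log_mul (by positivity) (by positivity)]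
    congr 1
    field_simp
  rw [Real.rpow_def_of_pos ht, Real.rpow_def_of_pos hsc, ← Real.exp_add, ← Real.exp_add,
    Real.exp_le_exp]
  have h3 : s * Real.log (t*c/s) ≤ s * (t*c/s - 1) :=
    mul_le_mul_of_nonneg_left h1 hs.le
  have h4 : s * (t*c/s - 1) = t*c - s := by field_simp
  nlinarith [h3]

/-- pointwise rate bound -/
lemma rate_bound {u s : ℝ} (hu : 0 < u) (hs : 0 < s) {w : ℝ} (hw : w ∈ Set.Ioo (0:ℝ) 1) :
    w ^ (u-1) * (-Real.log w) ^ s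
      ≤ ((s/(u/2)) ^ s * Real.exp (-s)) * w ^ (u/2 - 1) := by
  obtain ⟨h0, h1⟩ := hw
  have hlog : (0:ℝ) < -Real.log w := by simpa using Real.log_neg h0 h1
  have hsplit : w ^ (u-1) = w ^ (u/2-1) * w ^ (u/2) := by
    rw [← Real.rpow_add h0]
    ring_nf
  have hw2 : w ^ (u/2) = Real.exp (-((u/2) * (-Real.log w))) := by
    rw [Real.rpow_def_of_pos h0]
    congr 1
    ring
  have key : (-Real.log w) ^ s * Real.exp (-((u/2) * (-Real.log w)))
      ≤ (s/(u/2)) ^ s * Real.exp (-s) := rpow_mul_exp_le hs (by linarith) hlog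
  calc w ^ (u-1) * (-Real.log w) ^ s
      = w ^ (u/2-1) * ((-Real.log w) ^ s * Real.exp (-((u/2) * (-Real.log w)))) := by
        rw [hsplit, hw2]; ring
    _ ≤ w ^ (u/2-1) * ((s/(u/2)) ^ s * Real.exp (-s)) :=
        mul_le_mul_of_nonneg_left key (Real.rpow_nonneg h0.le _)
    _ = ((s/(u/2)) ^ s * Real.exp (-s)) * w ^ (u/2 - 1) := by ring

lemma denom_norm_ge {z : ℂ} (hz : ‖z‖ < 1) {w : ℝ} (h0 : 0 ≤ w) (h1 : w ≤ 1) :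
    1 - ‖z‖ ≤ ‖1 - (w:ℂ) * z‖ := by
  have hwz : ‖(w:ℂ) * z‖ ≤ ‖z‖ := by
    rw [norm_mul, Complex.norm_real, Real.norm_of_nonneg h0]
    nlinarith [norm_nonneg z]
  have h2 : ‖(1:ℂ)‖ - ‖(w:ℂ)*z‖ ≤ ‖1 - (w:ℂ)*z‖ := norm_sub_norm_le _ _
  rw [norm_one] at h2
  linarith

lemma denom_ne {z : ℂ} (hz : ‖z‖ < 1) {w : ℝ} (h0 : 0 ≤ w) (h1 : w ≤ 1) :
    1 - (w:ℂ) * z ≠ 0 := by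
  intro h
  have := denom_norm_ge hz h0 h1
  rw [h, norm_zero] at this
  linarith

lemma norm_Fc_le {u : ℝ} {z : ℂ} {s : ℝ} (hz : ‖z‖ < 1)
    {w : ℝ} (hw : w ∈ Set.Ioo (0:ℝ) 1) :
    ‖Fc u z s w‖ ≤ (1 - ‖z‖)⁻¹ * (w ^ (u-1) * (-Real.log w) ^ s) := by
  obtain ⟨h0, h1⟩ := hw
  have hpos : (0:ℝ) < 1 - ‖z‖ := by linarith
  have hd := denom_norm_ge hz h0.le h1.le
  have hlog : (0:ℝ) ≤ -Real.log w := by simpa using (Real.log_neg h0 h1).le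
  rw [Fc, norm_div, norm_mul, Complex.norm_real, Complex.norm_real,
    Real.norm_of_nonneg (Real.rpow_nonneg h0.le _),
    Real.norm_of_nonneg (Real.rpow_nonneg hlog _)]
  rw [div_le_iff₀ (lt_of_lt_of_le hpos hd)]
  have hnum : 0 ≤ w ^ (u-1) * (-Real.log w) ^ s := by
    have := Real.rpow_nonneg h0.le (u-1)
    have := Real.rpow_nonneg hlog s
    positivity
  calc w ^ (u-1) * (-Real.log w) ^ s
      = ((1 - ‖z‖)⁻¹ * (w ^ (u-1) * (-Real.log w) ^ s)) * (1 - ‖z‖) := by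
        field_simp
    _ ≤ ((1 - ‖z‖)⁻¹ * (w ^ (u-1) * (-Real.log w) ^ s)) * ‖1 - (w:ℂ)*z‖ := by
        refine mul_le_mul_of_nonneg_left hd (by positivity)

lemma contOn_Fc {u : ℝ} {z : ℂ} {s : ℝ} (hz : ‖z‖ < 1) (hs : 0 < s) :
    ContinuousOn (Fc u z s) (Set.Ioo 0 1) := by
  refine ContinuousOn.div ?_ ?_ ?_
  · refine ContinuousOn.mul ?_ ?_
    · exact Complex.continuous_ofReal.comp_continuousOn
        (fun w hw => (Real.continuousAt_rpow_const w (u-1) (Or.inl hw.1.ne')).continuousWithinAt)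
    · refine Complex.continuous_ofReal.comp_continuousOn ?_
      refine ContinuousOn.rpow_const ?_ (fun w hw => Or.inr hs.le)
      exact (Real.continuousOn_log.mono (fun w hw => hw.1.ne')).neg
  · exact continuousOn_const.sub ((Complex.continuous_ofReal.continuousOn).mul continuousOn_const)
  · exact fun w hw => denom_ne hz hw.1.le hw.2.le

lemma integrableOn_Fc {u : ℝ} {z : ℂ} {s : ℝ} (hu : 0 < u) (hz : ‖z‖ < 1)
    (hs : 0 < s) : IntegrableOn (Fc u z s) (Set.Ioo 0 1) := by
  have hb : IntegrableOn (fun w : ℝ => (1 - ‖z‖)⁻¹ * (w ^ (u-1) * (-Real.log w) ^ s))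
      (Set.Ioo 0 1) := (integrableOn_rpow_log hu hs).const_mul _
  refine Integrable.mono' hb ((contOn_Fc hz hs).aestronglyMeasurable measurableSet_Ioo) ?_
  filter_upwards [ae_restrict_mem measurableSet_Ioo] with w hw
  exact norm_Fc_le hz hw

lemma integrableOn_logFc {u : ℝ} {z : ℂ} {s : ℝ} (hu : 0 < u) (hz : ‖z‖ < 1)
    (hs : 0 < s) :
    IntegrableOn (fun w : ℝ => Real.log w • Fc u z s w) (Set.Ioo 0 1) := by
  have hb : IntegrableOn
      (fun w : ℝ => (1 - ‖z‖)⁻¹ * (w ^ (u-1) * (-Real.log w) ^ (s+1)))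
      (Set.Ioo 0 1) := (integrableOn_rpow_log hu (by linarith)).const_mul _
  have hmeas : AEStronglyMeasurable (fun w : ℝ => Real.log w • Fc u z s w)
      (volume.restrict (Set.Ioo 0 1)) := by
    refine ContinuousOn.aestronglyMeasurable ?_ measurableSet_Ioo
    exact ContinuousOn.smul (Real.continuousOn_log.mono (fun w hw => hw.1.ne'))
      (contOn_Fc hz hs)
  refine Integrable.mono' hb hmeas ?_
  filter_upwards [ae_restrict_mem measurableSet_Ioo] with w hw
  have hlog : (0:ℝ) < -Real.log w := by simpa using Real.log_neg hw.1 hw.2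
  rw [norm_smul, Real.norm_eq_abs, abs_of_neg (by linarith : Real.log w < 0)]
  calc -Real.log w * ‖Fc u z s w‖
      ≤ -Real.log w * ((1 - ‖z‖)⁻¹ * (w ^ (u-1) * (-Real.log w) ^ s)) :=
        mul_le_mul_of_nonneg_left (norm_Fc_le hz hw) hlog.le
    _ = (1 - ‖z‖)⁻¹ * (w ^ (u-1) * (-Real.log w) ^ (s+1)) := by
        rw [Real.rpow_add hlog s 1, Real.rpow_one]
        ring

/-- bound on the primitive of `Fc` near 0 -/
lemma H_norm_le {u : ℝ} {z : ℂ} {s : ℝ} (hu : 0 < u) (hz : ‖z‖ < 1) (hs : 0 < s)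
    {x : ℝ} (hx : x ∈ Set.Ioo (0:ℝ) 1) :
    ‖∫ w in (0:ℝ)..x, Fc u z s w‖
      ≤ ((1 - ‖z‖)⁻¹ * ((s/(u/2)) ^ s * Real.exp (-s))) / (u/2) * x ^ (u/2) := by
  set B : ℝ := (1 - ‖z‖)⁻¹ * ((s/(u/2)) ^ s * Real.exp (-s)) with hB
  have hBnn : 0 ≤ B := by
    have : (0:ℝ) < 1 - ‖z‖ := by linarith
    positivity
  have hg : IntervalIntegrable (fun t : ℝ => B * t ^ (u/2-1)) volume 0 x :=
    (intervalIntegral.intervalIntegrable_rpow' (by linarith)).const_mul B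
  have hbound : ∀ t ∈ Set.Ioc (0:ℝ) x, ‖Fc u z s t‖ ≤ B * t ^ (u/2-1) := by
    intro t ht
    have ht' : t ∈ Set.Ioo (0:ℝ) 1 := ⟨ht.1, lt_of_le_of_lt ht.2 hx.2⟩
    calc ‖Fc u z s t‖ ≤ (1 - ‖z‖)⁻¹ * (t ^ (u-1) * (-Real.log t) ^ s) :=
          norm_Fc_le hz ht'
      _ ≤ (1 - ‖z‖)⁻¹ * (((s/(u/2)) ^ s * Real.exp (-s)) * t ^ (u/2-1)) := by
          refine mul_le_mul_of_nonneg_left (rate_bound hu hs ht') ?_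
          have : (0:ℝ) < 1 - ‖z‖ := by linarith
          positivity
      _ = B * t ^ (u/2-1) := by rw [hB]; ring
  have h1 : ‖∫ w in (0:ℝ)..x, Fc u z s w‖ ≤ |∫ t in (0:ℝ)..x, B * t ^ (u/2-1)| := by
    refine intervalIntegral.norm_integral_le_abs_of_norm_le ?_ hg
    rw [Set.uIoc_of_le hx.1.le]
    filter_upwards [ae_restrict_mem measurableSet_Ioc] with t ht
    exact hbound t ht
  have h2 : ∫ t in (0:ℝ)..x, B * t ^ (u/2-1) = B / (u/2) * x ^ (u/2) := by
    rw [intervalIntegral.integral_const_mul, integral_rpow (Or.inl (by linarith))]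
    rw [Real.zero_rpow (by rw [sub_add_cancel]; positivity)]
    rw [sub_add_cancel]
    ring
  rw [h2] at h1
  calc ‖∫ w in (0:ℝ)..x, Fc u z s w‖ ≤ |B / (u/2) * x ^ (u/2)| := h1
    _ = B / (u/2) * x ^ (u/2) := by
        rw [abs_of_nonneg (mul_nonneg (div_nonneg hBnn (by linarith)) (Real.rpow_nonneg hx.1.le _))]

lemma tendsto_logH {u : ℝ} {z : ℂ} {s : ℝ} (hu : 0 < u) (hz : ‖z‖ < 1) (hs : 0 < s) :
    Tendsto (fun x : ℝ => Real.log x • (∫ w in (0:ℝ)..x, Fc u z s w)) (𝓝[>] 0) (𝓝 0) := by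
  set C : ℝ := ((1 - ‖z‖)⁻¹ * ((s/(u/2)) ^ s * Real.exp (-s))) / (u/2) with hC
  have hCnn : 0 ≤ C := by
    have : (0:ℝ) < 1 - ‖z‖ := by linarith
    positivity
  have hlim : Tendsto (fun x : ℝ => C * |Real.log x * x ^ (u/2)|) (𝓝[>] 0) (𝓝 0) := by
    have := (tendsto_log_mul_rpow_nhdsGT_zero (by linarith : (0:ℝ) < u/2)).abs
    simpa using this.const_mul C
  refine squeeze_zero_norm' ?_ hlim
  filter_upwards [Ioo_mem_nhdsGT_of_mem (by norm_num : (0:ℝ) ∈ Set.Ico (0:ℝ) 1)] with x hx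
  have hxlog : Real.log x < 0 := Real.log_neg hx.1 hx.2
  rw [norm_smul, Real.norm_eq_abs]
  have h1 : ‖∫ w in (0:ℝ)..x, Fc u z s w‖ ≤ C * x ^ (u/2) := H_norm_le hu hz hs hx
  calc |Real.log x| * ‖∫ w in (0:ℝ)..x, Fc u z s w‖
      ≤ |Real.log x| * (C * x ^ (u/2)) :=
        mul_le_mul_of_nonneg_left h1 (abs_nonneg _)
    _ = C * |Real.log x * x ^ (u/2)| := by
        rw [abs_mul, abs_of_nonneg (Real.rpow_nonneg hx.1.le _)]
        ring

lemma step2 {u : ℝ} {z : ℂ} {s : ℝ} (hu : 0 < u) (hz : ‖z‖ < 1) (hs : 0 < s) :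
    ∫ x in Set.Ioo (0:ℝ) 1, (x⁻¹ • ∫ w in (0:ℝ)..x, Fc u z s w)
      = ∫ w in Set.Ioo (0:ℝ) 1, (-Real.log w) • Fc u z s w := by
  set H : ℝ → ℂ := fun x => ∫ w in (0:ℝ)..x, Fc u z s w with hH
  set K : ℝ → ℂ := fun x => ∫ w in (0:ℝ)..x, Real.log w • Fc u z s w with hK
  set C : ℝ := ((1 - ‖z‖)⁻¹ * ((s/(u/2)) ^ s * Real.exp (-s))) / (u/2) with hC
  have hCnn : 0 ≤ C := by
    have : (0:ℝ) < 1 - ‖z‖ := by linarith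
    positivity
  have hFIcc : IntegrableOn (Fc u z s) (Set.Icc 0 1) := by
    rw [integrableOn_Icc_iff_integrableOn_Ioo]; exact integrableOn_Fc hu hz hs
  have hLFIcc : IntegrableOn (fun w : ℝ => Real.log w • Fc u z s w) (Set.Icc 0 1) := by
    rw [integrableOn_Icc_iff_integrableOn_Ioo]; exact integrableOn_logFc hu hz hs
  -- continuity of primitives
  have hHcont : ContinuousOn H (Set.Icc 0 1) := by
    have := intervalIntegral.continuousOn_primitive_interval (a := 0) (b := 1) (μ := volume)
      (f := Fc u z s) (by rwa [Set.uIcc_of_le zero_le_one])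
    rwa [Set.uIcc_of_le zero_le_one] at this
  have hKcont : ContinuousOn K (Set.Icc 0 1) := by
    have := intervalIntegral.continuousOn_primitive_interval (a := 0) (b := 1) (μ := volume)
      (f := fun w : ℝ => Real.log w • Fc u z s w) (by rwa [Set.uIcc_of_le zero_le_one])
    rwa [Set.uIcc_of_le zero_le_one] at this
  -- derivatives on Ioo
  have hHderiv : ∀ x ∈ Set.Ioo (0:ℝ) 1, HasDerivAt H (Fc u z s x) x := by
    intro x hx
    refine intervalIntegral.integral_hasDerivAt_right ?_ ?_ ?_
    · rw [intervalIntegrable_iff_integrableOn_Ioc_of_le hx.1.le]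
      exact ((integrableOn_Fc hu hz hs).mono_set
        (fun w hw => ⟨hw.1, lt_of_le_of_lt hw.2 hx.2⟩))
    · exact ContinuousOn.stronglyMeasurableAtFilter isOpen_Ioo (contOn_Fc hz hs) x hx
    · exact (contOn_Fc hz hs).continuousAt (isOpen_Ioo.mem_nhds hx)
  have hLFcont : ContinuousOn (fun w : ℝ => Real.log w • Fc u z s w) (Set.Ioo 0 1) :=
    ContinuousOn.smul (Real.continuousOn_log.mono (fun w hw => hw.1.ne')) (contOn_Fc hz hs)
  have hKderiv : ∀ x ∈ Set.Ioo (0:ℝ) 1, HasDerivAt K (Real.log x • Fc u z s x) x := by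
    intro x hx
    refine intervalIntegral.integral_hasDerivAt_right ?_ ?_ ?_
    · rw [intervalIntegrable_iff_integrableOn_Ioc_of_le hx.1.le]
      exact ((integrableOn_logFc hu hz hs).mono_set
        (fun w hw => ⟨hw.1, lt_of_le_of_lt hw.2 hx.2⟩))
    · exact ContinuousOn.stronglyMeasurableAtFilter isOpen_Ioo hLFcont x hx
    · exact hLFcont.continuousAt (isOpen_Ioo.mem_nhds hx)
  -- the combined function
  set f : ℝ → ℂ := fun x => Real.log x • H x - K x with hf
  have hfderiv : ∀ x ∈ Set.Ioo (0:ℝ) 1, HasDerivAt f (x⁻¹ • H x) x := by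
    intro x hx
    have h1 : HasDerivAt (fun t : ℝ => Real.log t • H t)
        (Real.log x • Fc u z s x + x⁻¹ • H x) x := by
      exact (Real.hasDerivAt_log hx.1.ne').smul (hHderiv x hx)
    have := h1.sub (hKderiv x hx)
    rw [add_sub_cancel_left] at this
    exact this
  have hfint : IntervalIntegrable (fun x : ℝ => x⁻¹ • H x) volume 0 1 := by
    rw [intervalIntegrable_iff_integrableOn_Ioo_of_le zero_le_one]
    have hb : IntegrableOn (fun x : ℝ => C * x ^ (u/2-1)) (Set.Ioo 0 1) := by
      have : IntervalIntegrable (fun t : ℝ => C * t ^ (u/2-1)) volume 0 1 :=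
        (intervalIntegral.intervalIntegrable_rpow' (by linarith)).const_mul C
      rwa [intervalIntegrable_iff_integrableOn_Ioo_of_le zero_le_one] at this
    have hmeas : AEStronglyMeasurable (fun x : ℝ => x⁻¹ • H x)
        (volume.restrict (Set.Ioo 0 1)) := by
      refine ContinuousOn.aestronglyMeasurable ?_ measurableSet_Ioo
      exact ContinuousOn.smul (continuousOn_inv₀.mono (fun x hx => hx.1.ne'))
        (hHcont.mono Set.Ioo_subset_Icc_self)
    refine Integrable.mono' hb hmeas ?_
    filter_upwards [ae_restrict_mem measurableSet_Ioo] with x hx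
    rw [norm_smul, Real.norm_eq_abs, abs_of_pos (inv_pos.mpr hx.1)]
    calc x⁻¹ * ‖H x‖ ≤ x⁻¹ * (C * x ^ (u/2)) :=
          mul_le_mul_of_nonneg_left (H_norm_le hu hz hs hx) (inv_pos.mpr hx.1).le
      _ = C * x ^ (u/2-1) := by
          rw [Real.rpow_sub_one hx.1.ne']
          field_simp
  -- limits
  have hlim0 : Tendsto f (𝓝[>] (0:ℝ)) (𝓝 0) := by
    have hmem : Set.Icc (0:ℝ) 1 ∈ 𝓝[>] (0:ℝ) :=
      Filter.mem_of_superset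
        (Ioc_mem_nhdsGT_of_mem (by norm_num : (0:ℝ) ∈ Set.Ico (0:ℝ) 1))
        Set.Ioc_subset_Icc_self
    have hcK : Tendsto K (𝓝[>] (0:ℝ)) (𝓝 (K 0)) :=
      ((hKcont 0 (by norm_num)).tendsto).mono_left (nhdsWithin_le_iff.mpr hmem)
    have hK0 : K 0 = 0 := intervalIntegral.integral_same
    rw [hK0] at hcK
    have := (tendsto_logH hu hz hs).sub hcK
    rw [sub_zero] at this
    exact this
  have hlim1 : Tendsto f (𝓝[<] (1:ℝ)) (𝓝 (-K 1)) := by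
    have hmem : Set.Icc (0:ℝ) 1 ∈ 𝓝[<] (1:ℝ) :=
      Filter.mem_of_superset
        (Ico_mem_nhdsLT_of_mem (by norm_num : (1:ℝ) ∈ Set.Ioc (0:ℝ) 1))
        Set.Ico_subset_Icc_self
    have hfc : ContinuousWithinAt f (Set.Icc 0 1) 1 := by
      refine ContinuousWithinAt.sub ?_ (hKcont 1 (by norm_num))
      exact ((Real.continuousAt_log one_ne_zero).continuousWithinAt).smul
        (hHcont 1 (by norm_num))
    have := hfc.tendsto.mono_left (nhdsWithin_le_iff.mpr hmem)
    simpa [hf, Real.log_one] using this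
  have key := intervalIntegral.integral_eq_sub_of_hasDerivAt_of_tendsto
    zero_lt_one hfderiv hfint hlim0 hlim1
  rw [sub_zero] at key
  have lhs_eq : ∫ x in Set.Ioo (0:ℝ) 1, (x⁻¹ • ∫ w in (0:ℝ)..x, Fc u z s w)
      = ∫ x in (0:ℝ)..1, x⁻¹ • H x := by
    rw [intervalIntegral.integral_of_le zero_le_one, integral_Ioc_eq_integral_Ioo]
  rw [lhs_eq, key]
  have : -K 1 = ∫ w in (0:ℝ)..1, (-Real.log w) • Fc u z s w := by
    rw [hK, ← intervalIntegral.integral_neg]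
    congr 1
    ext w
    rw [neg_smul]
  rw [this, intervalIntegral.integral_of_le zero_le_one, integral_Ioc_eq_integral_Ioo]

noncomputable def Gk (u : ℝ) (z : ℂ) (s : ℝ) (k : ℕ) (w : ℝ) : ℂ :=
  ((w ^ (u - 1) * (-Real.log w) ^ (s+1) : ℝ) : ℂ) * ((w:ℂ) * z) ^ k

lemma Gk_eq {u : ℝ} {z : ℂ} {s : ℝ} (k : ℕ) {w : ℝ} (hw : w ∈ Set.Ioo (0:ℝ) 1) :
    Gk u z s k w = ((w ^ (u + k - 1) * (-Real.log w) ^ (s+1) : ℝ) : ℂ) * z ^ k := by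
  rw [Gk, mul_pow, ← Complex.ofReal_pow, ← Real.rpow_natCast w k,
    show u + (k:ℝ) - 1 = (u-1) + (k:ℝ) by ring, Real.rpow_add hw.1]
  push_cast
  ring

lemma contOn_Gk {u : ℝ} {z : ℂ} {s : ℝ} (hs : 0 < s) (k : ℕ) :
    ContinuousOn (Gk u z s k) (Set.Ioo 0 1) := by
  refine ContinuousOn.mul ?_ (Continuous.continuousOn (by continuity))
  refine Complex.continuous_ofReal.comp_continuousOn (ContinuousOn.mul ?_ ?_)
  · exact fun w hw => (Real.continuousAt_rpow_const w (u-1) (Or.inl hw.1.ne')).continuousWithinAt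
  · refine ContinuousOn.rpow_const ?_ (fun w hw => Or.inr (by linarith))
    exact (Real.continuousOn_log.mono (fun w hw => hw.1.ne')).neg

lemma norm_Gk {u : ℝ} {z : ℂ} {s : ℝ} (k : ℕ) {w : ℝ} (hw : w ∈ Set.Ioo (0:ℝ) 1) :
    ‖Gk u z s k w‖ = (‖z‖) ^ k * (w ^ (u + k - 1) * (-Real.log w) ^ (s+1)) := by
  have hlog : (0:ℝ) ≤ -Real.log w := by simpa using (Real.log_neg hw.1 hw.2).le
  rw [Gk_eq k hw, norm_mul, Complex.norm_real, norm_pow,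
    Real.norm_of_nonneg (mul_nonneg (Real.rpow_nonneg hw.1.le _) (Real.rpow_nonneg hlog _))]
  ring

lemma integrableOn_Gk {u : ℝ} {z : ℂ} {s : ℝ} (hu : 0 < u) (hs : 0 < s) (k : ℕ) :
    IntegrableOn (Gk u z s k) (Set.Ioo 0 1) := by
  have huk : (0:ℝ) < u + k := by positivity
  have hb : IntegrableOn
      (fun w : ℝ => (‖z‖) ^ k * (w ^ (u + k - 1) * (-Real.log w) ^ (s+1)))
      (Set.Ioo 0 1) := (integrableOn_rpow_log huk (by linarith)).const_mul _
  refine Integrable.mono' hb ((contOn_Gk hs k).aestronglyMeasurable measurableSet_Ioo) ?_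
  filter_upwards [ae_restrict_mem measurableSet_Ioo] with w hw
  rw [norm_Gk k hw]

lemma integral_Gk {u : ℝ} {z : ℂ} {s : ℝ} (hu : 0 < u) (hs : 0 < s) (k : ℕ) :
    ∫ w in Set.Ioo (0:ℝ) 1, Gk u z s k w
      = ((Real.Gamma (s+2) * (1/(u+k)) ^ (s+2) : ℝ) : ℂ) * z ^ k := by
  have huk : (0:ℝ) < u + k := by positivity
  rw [setIntegral_congr_fun measurableSet_Ioo (fun w hw => Gk_eq k hw)]
  rw [MeasureTheory.integral_mul_const]
  have hoR : (∫ w in Set.Ioo (0:ℝ) 1, ((w ^ (u + k - 1) * (-Real.log w) ^ (s+1) : ℝ) : ℂ))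
      = ((∫ w in Set.Ioo (0:ℝ) 1, (w ^ (u + k - 1) * (-Real.log w) ^ (s+1) : ℝ) : ℝ) : ℂ) :=
    _root_.integral_ofReal
  rw [hoR, integral_rpow_log huk (by linarith : (0:ℝ) < s + 1),
    show s + 1 + 1 = s + 2 by ring]
  push_cast
  ring

theorem step3 {u : ℝ} {z : ℂ} {s : ℝ} (hu : 0 < u) (hz : ‖z‖ < 1) (hs : 0 < s) :
    ∫ w in Set.Ioo (0:ℝ) 1, (-Real.log w) • Fc u z s w
      = Complex.Gamma ((s : ℂ) + 2) *
          ∑' k : ℕ, z ^ k / ((u + k : ℝ) : ℂ) ^ ((s : ℂ) + 2) := by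
  have hz0 : (0:ℝ) ≤ ‖z‖ := norm_nonneg z
  -- pointwise series expansion
  have hpt : ∀ w ∈ Set.Ioo (0:ℝ) 1,
      (-Real.log w) • Fc u z s w = ∑' k : ℕ, Gk u z s k w := by
    intro w hw
    have hlog : (0:ℝ) < -Real.log w := by simpa using Real.log_neg hw.1 hw.2
    have hnorm : ‖(w:ℂ) * z‖ < 1 := by
      rw [norm_mul, Complex.norm_real, Real.norm_of_nonneg hw.1.le]
      nlinarith [hw.1, hw.2]
    have hgeo : ∑' k : ℕ, ((w:ℂ) * z) ^ k = (1 - (w:ℂ)*z)⁻¹ :=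
      tsum_geometric_of_norm_lt_one hnorm
    have : (-Real.log w) • Fc u z s w
        = ((w ^ (u - 1) * (-Real.log w) ^ (s+1) : ℝ) : ℂ) * (1 - (w:ℂ)*z)⁻¹ := by
      rw [Fc, Complex.real_smul, div_eq_mul_inv]
      rw [Real.rpow_add hlog s 1, Real.rpow_one]
      push_cast
      ring
    rw [this, ← hgeo, ← tsum_mul_left]
    rfl
  rw [setIntegral_congr_fun measurableSet_Ioo hpt]
  -- interchange sum and integral
  have hmeas : ∀ k : ℕ, AEStronglyMeasurable (Gk u z s k)
      (volume.restrict (Set.Ioo 0 1)) :=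
    fun k => (contOn_Gk hs k).aestronglyMeasurable measurableSet_Ioo
  have hbnd : ∑' k : ℕ, ∫⁻ w in Set.Ioo (0:ℝ) 1, ‖Gk u z s k w‖ₑ ≠ ⊤ := by
    have hterm : ∀ k : ℕ, ∫⁻ w in Set.Ioo (0:ℝ) 1, ‖Gk u z s k w‖ₑ
        ≤ ENNReal.ofReal ((Real.Gamma (s+2) * (1/u) ^ (s+2)) * (‖z‖) ^ k) := by
      intro k
      have huk : (0:ℝ) < u + k := by positivity
      rw [← ofReal_integral_norm_eq_lintegral_enorm (integrableOn_Gk hu hs k)]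
      refine ENNReal.ofReal_le_ofReal ?_
      rw [setIntegral_congr_fun measurableSet_Ioo (fun w hw => norm_Gk k hw),
        MeasureTheory.integral_const_mul, integral_rpow_log huk (by linarith : (0:ℝ) < s+1)]
      rw [show s + 1 + 1 = s + 2 by ring]
      have h1u : (1/(u+k) : ℝ) ^ (s+2) ≤ (1/u) ^ (s+2) := by
        refine Real.rpow_le_rpow (by positivity) ?_ (by linarith)
        refine one_div_le_one_div_of_le hu (by simp)
      have hg : (0:ℝ) ≤ Real.Gamma (s+2) := Real.Gamma_nonneg_of_nonneg (by linarith)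
      calc (‖z‖) ^ k * ((1/(u+k)) ^ (s+2) * Real.Gamma (s+2))
          ≤ (‖z‖) ^ k * ((1/u) ^ (s+2) * Real.Gamma (s+2)) := by
            refine mul_le_mul_of_nonneg_left ?_ (by positivity)
            exact mul_le_mul_of_nonneg_right h1u hg
        _ = Real.Gamma (s+2) * (1/u) ^ (s+2) * (‖z‖) ^ k := by ring
    refine ne_top_of_le_ne_top ?_ (ENNReal.tsum_le_tsum hterm)
    rw [← ENNReal.ofReal_tsum_of_nonneg (fun k => by positivity)
      ((summable_geometric_of_lt_one hz0 hz).mul_left _)]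
    exact ENNReal.ofReal_ne_top
  rw [MeasureTheory.integral_tsum hmeas hbnd]
  -- evaluate each term
  have hterm : ∀ k : ℕ, ∫ w in Set.Ioo (0:ℝ) 1, Gk u z s k w
      = Complex.Gamma ((s : ℂ) + 2) * (z ^ k / ((u + k : ℝ) : ℂ) ^ ((s : ℂ) + 2)) := by
    intro k
    have huk : (0:ℝ) < u + k := by positivity
    have hcast : ((s:ℂ) + 2) = ((s + 2 : ℝ) : ℂ) := by push_cast; ring
    have hden : ((u + k : ℝ) : ℂ) ^ ((s : ℂ) + 2) = (((u+k) ^ (s+2) : ℝ) : ℂ) := by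
      rw [hcast, Complex.ofReal_cpow huk.le]
    have hdenne : (((u+k) ^ (s+2) : ℝ) : ℂ) ≠ 0 := by
      simpa using (Real.rpow_pos_of_pos huk (s+2)).ne'
    rw [integral_Gk hu hs k, hden, hcast, Complex.Gamma_ofReal]
    rw [one_div, Real.inv_rpow huk.le]
    push_cast
    field_simp
  rw [tsum_congr hterm, tsum_mul_left]

theorem double_integral_lerch (u : ℝ) (hu : 0 < u) (z : ℂ) (hz : ‖z‖ < 1)
    (s : ℝ) (hs : 0 < s) :
    (∫ x in (0:ℝ)..1, ∫ y in (0:ℝ)..1,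
        (((x * y) ^ (u - 1) : ℝ) : ℂ) * (((-Real.log (x * y)) ^ s : ℝ) : ℂ) /
          (1 - (x : ℂ) * (y : ℂ) * z)) =
      Complex.Gamma ((s : ℂ) + 2) *
        ∑' k : ℕ, z ^ k / ((u + k : ℝ) : ℂ) ^ ((s : ℂ) + 2) := by
  have h1 : (∫ x in (0:ℝ)..1, ∫ y in (0:ℝ)..1,
        (((x * y) ^ (u - 1) : ℝ) : ℂ) * (((-Real.log (x * y)) ^ s : ℝ) : ℂ) /
          (1 - (x : ℂ) * (y : ℂ) * z))
      = ∫ x in Set.Ioo (0:ℝ) 1, (x⁻¹ • ∫ w in (0:ℝ)..x, Fc u z s w) := by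
    rw [intervalIntegral.integral_of_le zero_le_one, integral_Ioc_eq_integral_Ioo]
    refine setIntegral_congr_fun measurableSet_Ioo (fun x hx => ?_)
    have hinner : ∀ y : ℝ,
        (((x * y) ^ (u - 1) : ℝ) : ℂ) * (((-Real.log (x * y)) ^ s : ℝ) : ℂ) /
          (1 - (x : ℂ) * (y : ℂ) * z) = Fc u z s (x * y) := by
      intro y
      rw [Fc, Complex.ofReal_mul]
    simp_rw [hinner]
    have := intervalIntegral.integral_comp_mul_left (a := (0:ℝ)) (b := 1)
      (Fc u z s) hx.1.ne'
    rw [this, mul_zero, mul_one]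
  rw [h1, step2 hu hz hs, step3 hu hz hs]
end

section
/- ∫_0^1 ∫_0^1 (−ln(xy))/(1 − xy) dx dy = 2ζ(3). -/
open Real MeasureTheory Set intervalIntegral

lemma neg_log_le' (y : ℝ) (hy : 0 < y) : -Real.log y ≤ 2 * y ^ (-(1:ℝ)/2) := by
  have h1 : Real.log (y ^ (-(1:ℝ)/2)) ≤ y ^ (-(1:ℝ)/2) - 1 :=
    Real.log_le_sub_one_of_pos (Real.rpow_pos_of_pos hy _)
  rw [Real.log_rpow hy] at h1
  nlinarith [Real.rpow_pos_of_pos hy (-(1:ℝ)/2)]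

lemma intOn_log_pow (n : ℕ) :
    IntegrableOn (fun y : ℝ => y ^ n * (-Real.log y)) (Ioc 0 1) := by
  have hb : IntegrableOn (fun y : ℝ => 2 * y ^ (-(1:ℝ)/2)) (Ioc 0 1) := by
    have := (intervalIntegrable_rpow' (a := 0) (b := 1) (r := -(1:ℝ)/2) (by norm_num)).1
    exact this.const_mul 2
  refine Integrable.mono' hb ?_ ?_
  · exact ((measurable_id.pow_const n).mul measurable_log.neg).aestronglyMeasurable
  · filter_upwards [ae_restrict_mem measurableSet_Ioc] with y hy
    have hy0 := hy.1
    have hlog : 0 ≤ -Real.log y := by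
      simpa using Real.log_nonpos hy0.le hy.2
    have hpow : y ^ n ≤ 1 := pow_le_one₀ hy0.le hy.2
    rw [Real.norm_eq_abs, abs_of_nonneg (by positivity)]
    calc y ^ n * (-Real.log y) ≤ 1 * (-Real.log y) := by
          exact mul_le_mul_of_nonneg_right hpow hlog
      _ = -Real.log y := one_mul _
      _ ≤ 2 * y ^ (-(1:ℝ)/2) := neg_log_le' y hy0

lemma J2 (n : ℕ) : ∫ y in Ioc (0:ℝ) 1, y ^ n * (-Real.log y) = 1 / (n + 1) ^ 2 := by
  set G : ℝ → ℝ := fun y => y ^ (n+1) * (1 - (n+1) * Real.log y) / (n+1)^2 with hG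
  have hcont : ContinuousOn G (Icc 0 1) := by
    intro y hy
    rcases eq_or_ne y 0 with rfl | hy0
    · -- continuity at 0
      have h0 : G 0 = 0 := by simp [hG]
      rw [← continuousWithinAt_diff_self, ContinuousWithinAt, h0]
      have ht : Filter.Tendsto G (nhdsWithin 0 (Ioi 0)) (nhds 0) := by
        have h1 : Filter.Tendsto (fun y : ℝ => Real.log y * y ^ ((n:ℝ)+1))
            (nhdsWithin 0 (Ioi 0)) (nhds 0) := tendsto_log_mul_rpow_nhdsGT_zero (by positivity)
        have h2 : Filter.Tendsto (fun y : ℝ => y ^ (n+1)) (nhdsWithin 0 (Ioi 0)) (nhds 0) := by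
          have := (continuous_pow (n+1) (M := ℝ)).tendsto 0
          simp only [zero_pow (Nat.succ_ne_zero n)] at this
          exact this.mono_left nhdsWithin_le_nhds
        have key : Filter.Tendsto (fun y : ℝ => y ^ (n+1) * (1 - (n+1) * Real.log y))
            (nhdsWithin 0 (Ioi 0)) (nhds 0) := by
          have heq : ∀ y ∈ Ioi (0:ℝ), y ^ (n+1) * (1 - (n+1) * Real.log y)
              = y ^ (n+1) - (n+1) * (Real.log y * y ^ ((n:ℝ)+1)) := by
            intro y hy
            rw [← Real.rpow_natCast y (n+1)]
            push_cast
            ring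
          have : Filter.Tendsto (fun y : ℝ => y ^ (n+1) - (n+1) * (Real.log y * y ^ ((n:ℝ)+1)))
              (nhdsWithin 0 (Ioi 0)) (nhds 0) := by
            have := h2.sub ((h1.const_mul ((n:ℝ)+1)))
            simpa using this
          exact this.congr' (by filter_upwards [self_mem_nhdsWithin] with y hy using (heq y hy).symm)
        have := key.div_const ((n+1)^2 : ℝ)
        simpa [hG] using this
      exact ht.mono_left (nhdsWithin_mono _ (fun z hz =>
        lt_of_le_of_ne hz.1.1 (Ne.symm hz.2)))
    · exact (ContinuousAt.continuousWithinAt (by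
        have : ContinuousAt Real.log y := Real.continuousAt_log hy0
        fun_prop (disch := assumption)))
  have hd : ∀ y ∈ Ioo (0:ℝ) 1, HasDerivAt G (y ^ n * (-Real.log y)) y := by
    intro y hy
    have h1 : HasDerivAt (fun y : ℝ => y ^ (n+1) * (1 - (n+1) * Real.log y))
        (((n+1) * y ^ n) * (1 - (n+1) * Real.log y) + y ^ (n+1) * (-((n+1) * y⁻¹))) y := by
      have hp : HasDerivAt (fun y : ℝ => y ^ (n+1)) ((n+1) * y ^ n) y := by
        simpa using hasDerivAt_pow (n+1) y
      have hl : HasDerivAt (fun y : ℝ => 1 - (n+1) * Real.log y) (-((n+1) * y⁻¹)) y := by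
        simpa using ((Real.hasDerivAt_log hy.1.ne').const_mul ((n:ℝ)+1)).const_sub 1
      exact hp.mul hl
    have := h1.div_const (((n:ℝ)+1)^2)
    refine this.congr_deriv ?_
    have hy0 : y ≠ 0 := hy.1.ne'
    have hn : ((n:ℝ)+1) ≠ 0 := by positivity
    field_simp
    ring
  have hint : IntervalIntegrable (fun y : ℝ => y ^ n * (-Real.log y)) volume 0 1 :=
    (intervalIntegrable_iff_integrableOn_Ioc_of_le zero_le_one).2 (intOn_log_pow n)
  have := intervalIntegral.integral_eq_sub_of_hasDeriv_right_of_le zero_le_one hcont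
    (fun y hy => (hd y hy).hasDerivWithinAt) hint
  rw [intervalIntegral.integral_of_le zero_le_one] at this
  rw [this]
  simp [hG]

lemma J1 (n : ℕ) : ∫ y in Ioc (0:ℝ) 1, y ^ n = 1 / ((n:ℝ) + 1) := by
  rw [← intervalIntegral.integral_of_le zero_le_one, integral_pow]
  simp

lemma intOn_pow (n : ℕ) (c : ℝ) :
    IntegrableOn (fun y : ℝ => c * y ^ n) (Ioc 0 1) :=
  (continuous_const.mul (continuous_pow n)).integrableOn_Ioc

lemma inner_eq (x : ℝ) (hx : x ∈ Ioo (0:ℝ) 1) :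
    ∫ y in (0:ℝ)..1, -Real.log (x*y) / (1 - x*y)
      = ∑' n : ℕ, (x ^ n * (-Real.log x) * (1/((n:ℝ)+1)) + x ^ n * (1/((n:ℝ)+1)^2)) := by
  have hx0 := hx.1
  have hx1 := hx.2
  have hxy : ∀ y ∈ Ioc (0:ℝ) 1, 0 < x * y ∧ x * y < 1 := by
    intro y hy
    constructor
    · exact mul_pos hx0 hy.1
    · calc x * y ≤ x * 1 := by nlinarith [hy.1, hy.2]
        _ < 1 := by linarith
  rw [intervalIntegral.integral_of_le zero_le_one]
  have hcongr : EqOn (fun y : ℝ => -Real.log (x*y) / (1 - x*y))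
      (fun y : ℝ => ∑' n : ℕ, (x*y) ^ n * (-Real.log (x*y))) (Ioc 0 1) := by
    intro y hy
    obtain ⟨h0, h1⟩ := hxy y hy
    simp only
    rw [tsum_mul_right, tsum_geometric_of_lt_one h0.le h1, div_eq_mul_inv, mul_comm]
  rw [setIntegral_congr_fun measurableSet_Ioc hcongr]
  have hEq : ∀ n : ℕ, EqOn (fun y : ℝ => (x*y) ^ n * (-Real.log (x*y)))
      (fun y : ℝ => x ^ n * (-Real.log x) * y ^ n + x ^ n * (y ^ n * (-Real.log y))) (Ioc 0 1) := by
    intro n y hy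
    simp only
    rw [mul_pow, Real.log_mul hx0.ne' hy.1.ne']
    ring
  have hgInt : ∀ n : ℕ, IntegrableOn
      (fun y : ℝ => x ^ n * (-Real.log x) * y ^ n + x ^ n * (y ^ n * (-Real.log y))) (Ioc 0 1) :=
    fun n => (intOn_pow n _).add ((intOn_log_pow n).const_mul _)
  have hFInt : ∀ n : ℕ, IntegrableOn (fun y : ℝ => (x*y) ^ n * (-Real.log (x*y))) (Ioc 0 1) :=
    fun n => ((hgInt n).congr_fun (fun y hy => ((hEq n) hy).symm) measurableSet_Ioc)
  have hIval : ∀ n : ℕ, ∫ y in Ioc (0:ℝ) 1, (x*y) ^ n * (-Real.log (x*y))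
      = x ^ n * (-Real.log x) * (1/((n:ℝ)+1)) + x ^ n * (1/((n:ℝ)+1)^2) := by
    intro n
    rw [setIntegral_congr_fun measurableSet_Ioc (hEq n),
      integral_add (intOn_pow n _) ((intOn_log_pow n).const_mul _),
      MeasureTheory.integral_const_mul, MeasureTheory.integral_const_mul, J1, J2]
  have hnonneg : ∀ n : ℕ, ∀ y ∈ Ioc (0:ℝ) 1, 0 ≤ (x*y) ^ n * (-Real.log (x*y)) := by
    intro n y hy
    obtain ⟨h0, h1⟩ := hxy y hy
    have hl : Real.log (x*y) ≤ 0 := Real.log_nonpos h0.le h1.le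
    have := pow_nonneg h0.le n
    nlinarith
  have hnorm : ∀ n : ℕ, ∫ y in Ioc (0:ℝ) 1, ‖(x*y) ^ n * (-Real.log (x*y))‖
      = x ^ n * (-Real.log x) * (1/((n:ℝ)+1)) + x ^ n * (1/((n:ℝ)+1)^2) := by
    intro n
    rw [← hIval n]
    refine setIntegral_congr_fun measurableSet_Ioc (fun y hy => ?_)
    exact Real.norm_of_nonneg (hnonneg n y hy)
  have hlx : 0 ≤ -Real.log x := by simpa using Real.log_nonpos hx0.le hx1.le
  have hsum : Summable (fun n : ℕ =>
      ∫ y in Ioc (0:ℝ) 1, ‖(x*y) ^ n * (-Real.log (x*y))‖) := by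
    simp only [hnorm]
    refine Summable.of_nonneg_of_le (fun n => ?_) (fun n => ?_)
      (((summable_geometric_of_lt_one hx0.le hx1).mul_left ((-Real.log x) + 1)))
    · have : (0:ℝ) ≤ x ^ n := by positivity
      positivity
    · have h1 : (1:ℝ)/((n:ℝ)+1) ≤ 1 := by
        rw [div_le_one (by positivity)]; simp
      have h2 : (1:ℝ)/((n:ℝ)+1)^2 ≤ 1 := by
        rw [div_le_one (by positivity)]
        nlinarith [Nat.cast_nonneg (α := ℝ) n]
      have hxn : (0:ℝ) ≤ x ^ n := by positivity
      have d1 : (0:ℝ) < ((n:ℝ)+1) := by positivity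
      have d2 : (0:ℝ) < ((n:ℝ)+1)^2 := by positivity
      nlinarith [mul_nonneg hxn hlx]
  have := MeasureTheory.integral_tsum_of_summable_integral_norm hFInt hsum
  rw [← this]
  exact tsum_congr hIval

lemma outer_eq : (∫ x in (0:ℝ)..1, ∫ y in (0:ℝ)..1, -Real.log (x*y) / (1 - x*y))
    = ∑' n : ℕ, 2 / ((n:ℝ)+1)^3 := by
  rw [intervalIntegral.integral_of_le zero_le_one, integral_Ioc_eq_integral_Ioo,
    setIntegral_congr_fun measurableSet_Ioo (fun x hx => inner_eq x hx)]
  have hFInt : ∀ n : ℕ, IntegrableOn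
      (fun x : ℝ => x ^ n * (-Real.log x) * (1/((n:ℝ)+1)) + x ^ n * (1/((n:ℝ)+1)^2))
      (Ioo 0 1) := by
    intro n
    refine IntegrableOn.mono_set ?_ Ioo_subset_Ioc_self
    exact ((intOn_log_pow n).mul_const _).add
      (((continuous_pow n).mul continuous_const).integrableOn_Ioc)
  have hIval : ∀ n : ℕ, ∫ x in Ioo (0:ℝ) 1,
      (x ^ n * (-Real.log x) * (1/((n:ℝ)+1)) + x ^ n * (1/((n:ℝ)+1)^2))
      = 2 / ((n:ℝ)+1)^3 := by
    intro n
    rw [← integral_Ioc_eq_integral_Ioo,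
      MeasureTheory.integral_add ((intOn_log_pow n).mul_const _)
        (show IntegrableOn (fun x : ℝ => x ^ n * (1/((n:ℝ)+1)^2)) (Ioc 0 1) volume from
          ((continuous_pow n).mul continuous_const).integrableOn_Ioc),
      MeasureTheory.integral_mul_const, MeasureTheory.integral_mul_const, J1, J2]
    have hn : ((n:ℝ)+1) ≠ 0 := by positivity
    field_simp
    ring
  have hnonneg : ∀ n : ℕ, ∀ x ∈ Ioo (0:ℝ) 1,
      0 ≤ x ^ n * (-Real.log x) * (1/((n:ℝ)+1)) + x ^ n * (1/((n:ℝ)+1)^2) := by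
    intro n x hx
    have hl : Real.log x ≤ 0 := Real.log_nonpos hx.1.le hx.2.le
    have h1 : (0:ℝ) ≤ x ^ n := pow_nonneg hx.1.le n
    have h2 : (0:ℝ) < ((n:ℝ)+1) := by positivity
    have h3 : (0:ℝ) < ((n:ℝ)+1)^2 := by positivity
    have := mul_nonneg h1 (neg_nonneg.2 hl)
    positivity
  have hsum : Summable (fun n : ℕ => ∫ x in Ioo (0:ℝ) 1,
      ‖x ^ n * (-Real.log x) * (1/((n:ℝ)+1)) + x ^ n * (1/((n:ℝ)+1)^2)‖) := by
    have heq : ∀ n : ℕ, (∫ x in Ioo (0:ℝ) 1,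
        ‖x ^ n * (-Real.log x) * (1/((n:ℝ)+1)) + x ^ n * (1/((n:ℝ)+1)^2)‖) = 2 / ((n:ℝ)+1)^3 := by
      intro n
      rw [← hIval n]
      exact setIntegral_congr_fun measurableSet_Ioo
        (fun x hx => Real.norm_of_nonneg (hnonneg n x hx))
    simp only [heq]
    have h3 : Summable (fun n : ℕ => 1 / ((n:ℝ))^3) := by
      rw [Real.summable_one_div_nat_pow]
      norm_num
    have h4 : Summable (fun n : ℕ => 1 / ((n:ℝ)+1)^3) := by
      have := (summable_nat_add_iff 1).2 h3
      refine this.congr (fun n => ?_)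
      push_cast
      ring_nf
    simpa [div_eq_mul_inv, mul_comm] using h4.mul_left 2
  rw [← MeasureTheory.integral_tsum_of_summable_integral_norm hFInt hsum]
  exact tsum_congr hIval

theorem beukers_zeta_three :
    ((∫ x in (0:ℝ)..1, ∫ y in (0:ℝ)..1, -Real.log (x * y) / (1 - x * y) : ℝ) : ℂ) =
      2 * riemannZeta 3 := by
  rw [outer_eq, zeta_eq_tsum_one_div_nat_add_one_cpow (by norm_num : 1 < (3:ℂ).re)]
  rw [Complex.ofReal_tsum, ← tsum_mul_left]
  refine tsum_congr (fun n => ?_)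
  have : ((n:ℂ) + 1) ^ (3:ℂ) = ((n:ℂ) + 1) ^ (3:ℕ) := by
    have := Complex.cpow_natCast ((n:ℂ)+1) 3
    simp only [Nat.cast_ofNat] at this; exact this
  rw [this]
  push_cast
  ring
end

section
/- ∫_0^1 ∫_0^1 1/(1 + x²y²) dx dy = G, where G = ∑_{k=0}^∞ (−1)^k/(2k+1)² is Catalan's constant. -/
/-!
Expand `1 / (1 + x²y²) = ∑ (-1)^k x^{2k} y^{2k}` as a geometric series and integrate term by term,
first in `y` (giving `∑ (-1)^k x^{2k} / (2k+1)`) and then in `x`. Both interchanges are justified by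
the summability of the integrals of the absolute values of the terms: a geometric bound for `|x| < 1`
in the inner integral, and `∑ 1 / (2k+1)²` in the outer one.
-/

open MeasureTheory Set
open scoped Interval

lemma integral_mul_pow_Ioc (c : ℝ) (n : ℕ) :
    ∫ y in Ioc (0 : ℝ) 1, c * y ^ n = c / (n + 1) := by
  rw [← intervalIntegral.integral_of_le zero_le_one, intervalIntegral.integral_const_mul,
    integral_pow]
  simp [div_eq_mul_inv]

lemma hasSum_intervalIntegral_tsum_mul_pow {a : ℕ → ℝ} {e : ℕ → ℕ}
    (h : Summable fun k => |a k| / (e k + 1)) :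
    HasSum (fun k => a k / (e k + 1)) (∫ y in (0 : ℝ)..1, ∑' k, a k * y ^ e k) := by
  rw [intervalIntegral.integral_of_le zero_le_one]
  have hintegral (k : ℕ) : ∫ y in Ioc (0 : ℝ) 1, a k * y ^ e k = a k / (e k + 1) :=
    integral_mul_pow_Ioc _ _
  have hintegral_norm (k : ℕ) : ∫ y in Ioc (0 : ℝ) 1, ‖a k * y ^ e k‖ = |a k| / (e k + 1) := by
    rw [← integral_mul_pow_Ioc]
    refine setIntegral_congr_fun measurableSet_Ioc fun y hy => ?_
    rw [Real.norm_eq_abs, abs_mul, abs_pow, abs_of_pos hy.1]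
  simpa only [hintegral] using hasSum_integral_of_summable_integral_norm
    (F := fun k y => a k * y ^ e k) (μ := volume.restrict (Ioc 0 1))
    (fun k => (continuous_const.mul (continuous_pow (e k))).integrableOn_Ioc)
    (by simpa only [hintegral_norm] using h)

lemma hasSum_neg_one_pow_mul_pow_two_mul {t : ℝ} (ht : |t| < 1) :
    HasSum (fun k : ℕ => (-1) ^ k * t ^ (2 * k)) (1 + t ^ 2)⁻¹ := by
  have hr : |-t ^ 2| < 1 := by
    rw [abs_neg, abs_pow, sq_lt_one_iff_abs_lt_one, abs_abs]
    exact ht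
  convert hasSum_geometric_of_abs_lt_one hr using 1
  · ext k
    rw [neg_pow (t ^ 2), pow_mul]
  · rw [sub_neg_eq_add]

lemma integral_one_div_one_add_sq_mul_sq_eq_tsum {x : ℝ} (hx : |x| < 1) :
    ∫ y in (0 : ℝ)..1, 1 / (1 + x ^ 2 * y ^ 2) =
      ∑' k : ℕ, (-1) ^ k / (2 * k + 1) * x ^ (2 * k) := by
  have hexpand : EqOn (fun y : ℝ => 1 / (1 + x ^ 2 * y ^ 2))
      (fun y => ∑' k : ℕ, (-1) ^ k * x ^ (2 * k) * y ^ (2 * k)) (uIcc 0 1) := by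
    intro y hy
    rw [uIcc_of_le zero_le_one] at hy
    have hxy : |x * y| < 1 := by
      rw [abs_mul, abs_of_nonneg hy.1]
      nlinarith [abs_nonneg x, hy.2]
    simp only [mul_assoc, ← mul_pow, one_div, (hasSum_neg_one_pow_mul_pow_two_mul hxy).tsum_eq]
  have hsum : Summable fun k : ℕ => |(-1) ^ k * x ^ (2 * k)| / ((2 * k : ℕ) + 1 : ℝ) := by
    refine (summable_geometric_of_lt_one (sq_nonneg x) ?_).of_nonneg_of_le
      (fun k => by positivity) fun k => ?_
    · rwa [sq_lt_one_iff_abs_lt_one]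
    · rw [abs_mul, abs_pow, abs_neg, abs_one, one_pow, one_mul, abs_pow, pow_mul, sq_abs]
      exact div_le_self (by positivity) (by simp)
  rw [intervalIntegral.integral_congr hexpand,
    ← (hasSum_intervalIntegral_tsum_mul_pow hsum).tsum_eq]
  push_cast
  simp only [mul_div_right_comm]

lemma summable_one_div_two_mul_add_one_sq :
    Summable fun k : ℕ => 1 / (2 * k + 1 : ℝ) ^ 2 := by
  have hinj : Function.Injective fun k : ℕ => 2 * k + 1 := fun a b h => by
    simp only at h
    omega
  refine ((Real.summable_one_div_nat_pow.mpr one_lt_two).comp_injective hinj).congr fun k => ?_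
  simp

theorem double_integral_catalan :
    (∫ x in (0:ℝ)..1, ∫ y in (0:ℝ)..1, 1 / (1 + x ^ 2 * y ^ 2)) =
      ∑' k : ℕ, (-1 : ℝ) ^ k / (2 * k + 1) ^ 2 := by
  -- At `x = 1` the series is only conditionally convergent, so its `tsum` is `0`; that point is null.
  have hinner : ∀ᵐ x : ℝ, x ∈ Ι (0 : ℝ) 1 → (∫ y in (0 : ℝ)..1, 1 / (1 + x ^ 2 * y ^ 2)) =
      ∑' k : ℕ, (-1) ^ k / (2 * k + 1) * x ^ (2 * k) := by
    filter_upwards [Measure.ae_ne volume (1 : ℝ)] with x hx1 hx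
    rw [uIoc_of_le zero_le_one] at hx
    exact integral_one_div_one_add_sq_mul_sq_eq_tsum
      (abs_lt.mpr ⟨by linarith [hx.1], lt_of_le_of_ne hx.2 hx1⟩)
  have hsum : Summable fun k : ℕ => |(-1) ^ k / (2 * k + 1 : ℝ)| / ((2 * k : ℕ) + 1 : ℝ) := by
    refine summable_one_div_two_mul_add_one_sq.congr fun k => ?_
    rw [abs_div, abs_pow, abs_neg, abs_one, one_pow, abs_of_pos (by positivity)]
    push_cast
    rw [div_div, sq]
  rw [intervalIntegral.integral_congr_ae hinner,
    ← (hasSum_intervalIntegral_tsum_mul_pow hsum).tsum_eq]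
  push_cast
  simp only [div_div, sq]
end

section
/- For real u > 0, ∫_0^1 ∫_0^1 (xy)^(u−1)/(1 − xy) dx dy = ψ'(u), the trigamma function at u. -/
open Filter Real Set MeasureTheory Finset
open scoped Topology Nat

namespace DIT

lemma summable_inv_sq_add (a : ℝ) (ha : 0 < a) :
    Summable (fun k : ℕ => 1 / ((k : ℝ) + a) ^ 2) := by
  have h1 : Summable (fun k : ℕ => 1 / ((k : ℝ) + 1) ^ 2) := by
    have h0 : Summable (fun n : ℕ => 1 / (n : ℝ) ^ 2) :=
      Real.summable_one_div_nat_pow.mpr one_lt_two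
    have := (summable_nat_add_iff (f := fun n : ℕ => 1 / (n : ℝ) ^ 2) 1).mpr h0
    simpa using this
  set c := min a 1 with hc
  have hc0 : 0 < c := lt_min ha one_pos
  refine Summable.of_nonneg_of_le (fun k => by positivity) (fun k => ?_)
    (h1.mul_left (1 / c ^ 2))
  have h2 : c ≤ 1 := min_le_right _ _
  have h3 : c ≤ a := min_le_left _ _
  have hk0 : (0:ℝ) ≤ (k : ℝ) := Nat.cast_nonneg k
  have hle : c * ((k:ℝ)+1) ≤ (k:ℝ)+a := by nlinarith
  have hsq : (c * ((k:ℝ)+1))^2 ≤ ((k:ℝ)+a)^2 :=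
    pow_le_pow_left₀ (by positivity) hle 2
  calc 1/((k:ℝ)+a)^2 ≤ 1/(c*((k:ℝ)+1))^2 :=
        one_div_le_one_div_of_le (by positivity) hsq
    _ = 1/c^2 * (1/((k:ℝ)+1)^2) := by rw [mul_pow]; rw [one_div, one_div, one_div, mul_inv]

lemma integral_Ioo_rpow {c : ℝ} (hc : -1 < c) :
    ∫ y in Ioo (0:ℝ) 1, y ^ c = 1/(c+1) := by
  rw [← MeasureTheory.integral_Ioc_eq_integral_Ioo,
    ← intervalIntegral.integral_of_le zero_le_one, integral_rpow (Or.inl hc),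
    Real.one_rpow, Real.zero_rpow (by linarith)]
  ring

lemma integrableOn_Ioo_rpow {c : ℝ} (hc : -1 < c) :
    IntegrableOn (fun y : ℝ => y ^ c) (Ioo (0:ℝ) 1) volume := by
  have h := intervalIntegral.intervalIntegrable_rpow' (a := 0) (b := 1) hc
  exact ((intervalIntegrable_iff_integrableOn_Ioc_of_le zero_le_one).mp h).mono_set
    Ioo_subset_Ioc_self

lemma inner_integral (u x : ℝ) (hu : 0 < u) (hx : x ∈ Ioo (0:ℝ) 1) :
    (∫ y in (0:ℝ)..1, (x * y) ^ (u - 1) / (1 - x * y)) =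
      ∑' n : ℕ, x ^ (u + n - 1) / (u + n) := by
  obtain ⟨hx0, hx1⟩ := hx
  set F : ℕ → ℝ → ℝ := fun n y => x ^ (u + n - 1) * y ^ (u + n - 1) with hF
  have hexp : ∀ n : ℕ, (-1:ℝ) < u + n - 1 := fun n => by
    have : (0:ℝ) ≤ n := Nat.cast_nonneg n
    linarith
  have hpos : ∀ n : ℕ, (0:ℝ) < u + n := fun n => by
    have : (0:ℝ) ≤ n := Nat.cast_nonneg n
    linarith
  -- pointwise identity on Ioo
  have key : ∀ y ∈ Ioo (0:ℝ) 1, (x * y) ^ (u - 1) / (1 - x * y) = ∑' n : ℕ, F n y := by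
    intro y hy
    obtain ⟨hy0, hy1⟩ := hy
    have hr0 : 0 ≤ x * y := by positivity
    have hr1 : x * y < 1 := by nlinarith
    have hFn : ∀ n : ℕ, F n y = x ^ (u-1) * y ^ (u-1) * (x*y) ^ n := by
      intro n
      have hx' : x ^ (u + n - 1) = x ^ (u-1) * x ^ (n:ℕ) := by
        rw [show u + (n:ℝ) - 1 = (u-1) + (n:ℝ) by ring, Real.rpow_add hx0,
          Real.rpow_natCast]
      have hy' : y ^ (u + n - 1) = y ^ (u-1) * y ^ (n:ℕ) := by
        rw [show u + (n:ℝ) - 1 = (u-1) + (n:ℝ) by ring, Real.rpow_add hy0,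
          Real.rpow_natCast]
      rw [hF]; simp only [hx', hy', mul_pow]; ring
    rw [tsum_congr hFn, tsum_mul_left, tsum_geometric_of_lt_one hr0 hr1,
      Real.mul_rpow hx0.le hy0.le, div_eq_mul_inv]
  -- integrability
  have hint : ∀ n : ℕ, IntegrableOn (F n) (Ioo (0:ℝ) 1) volume := by
    intro n
    exact (integrableOn_Ioo_rpow (hexp n)).const_mul _
  -- integral values
  have hval : ∀ n : ℕ, (∫ y in Ioo (0:ℝ) 1, F n y) = x ^ (u + n - 1) / (u + n) := by
    intro n
    rw [hF]
    rw [MeasureTheory.integral_const_mul, integral_Ioo_rpow (hexp n)]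
    rw [show u + (n:ℝ) - 1 + 1 = u + n by ring, mul_one_div]
  -- norms
  have hnorm : ∀ n : ℕ, (∫ y in Ioo (0:ℝ) 1, ‖F n y‖) = x ^ (u + n - 1) / (u + n) := by
    intro n
    rw [← hval n]
    refine setIntegral_congr_fun measurableSet_Ioo (fun y hy => ?_)
    exact Real.norm_of_nonneg
      (mul_nonneg (Real.rpow_nonneg hx0.le _) (Real.rpow_nonneg hy.1.le _))
  -- summability of integrals of norms
  have hsum : Summable (fun n : ℕ => ∫ y in Ioo (0:ℝ) 1, ‖F n y‖) := by
    rw [show (fun n : ℕ => ∫ y in Ioo (0:ℝ) 1, ‖F n y‖)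
        = fun n : ℕ => x ^ (u + n - 1) / (u + n) from funext hnorm]
    refine Summable.of_nonneg_of_le (fun n => by positivity) (fun n => ?_)
      ((summable_geometric_of_lt_one hx0.le hx1).mul_left (x ^ (u-1) / u))
    have h1 : x ^ (u + n - 1) = x ^ (u-1) * x ^ (n:ℕ) := by
      rw [show u + (n:ℝ) - 1 = (u-1) + (n:ℝ) by ring, Real.rpow_add hx0, Real.rpow_natCast]
    rw [h1]
    calc x ^ (u-1) * x ^ (n:ℕ) / (u + n) ≤ x ^ (u-1) * x ^ (n:ℕ) / u := by
          have hn : (0:ℝ) ≤ n := Nat.cast_nonneg n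
          apply div_le_div_of_nonneg_left (by positivity) hu (by linarith)
      _ = x ^ (u-1) / u * x ^ (n:ℕ) := by ring
  calc (∫ y in (0:ℝ)..1, (x * y) ^ (u - 1) / (1 - x * y))
      = ∫ y in Ioo (0:ℝ) 1, (x * y) ^ (u - 1) / (1 - x * y) := by
        rw [intervalIntegral.integral_of_le zero_le_one,
          MeasureTheory.integral_Ioc_eq_integral_Ioo]
    _ = ∫ y in Ioo (0:ℝ) 1, ∑' n : ℕ, F n y :=
        setIntegral_congr_fun measurableSet_Ioo key
    _ = ∑' n : ℕ, ∫ y in Ioo (0:ℝ) 1, F n y :=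
        (MeasureTheory.integral_tsum_of_summable_integral_norm hint hsum).symm
    _ = ∑' n : ℕ, x ^ (u + n - 1) / (u + n) := tsum_congr hval

lemma lhs_eq (u : ℝ) (hu : 0 < u) :
    (∫ x in (0:ℝ)..1, ∫ y in (0:ℝ)..1, (x * y) ^ (u - 1) / (1 - x * y)) =
      ∑' n : ℕ, 1 / (u + (n:ℝ)) ^ 2 := by
  set G : ℕ → ℝ → ℝ := fun n x => x ^ (u + n - 1) / (u + n) with hG
  have hexp : ∀ n : ℕ, (-1:ℝ) < u + n - 1 := fun n => by
    have : (0:ℝ) ≤ n := Nat.cast_nonneg n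
    linarith
  have hpos : ∀ n : ℕ, (0:ℝ) < u + n := fun n => by
    have : (0:ℝ) ≤ n := Nat.cast_nonneg n
    linarith
  have hint : ∀ n : ℕ, IntegrableOn (G n) (Ioo (0:ℝ) 1) volume := fun n =>
    (integrableOn_Ioo_rpow (hexp n)).div_const _
  have hval : ∀ n : ℕ, (∫ x in Ioo (0:ℝ) 1, G n x) = 1 / (u + n) ^ 2 := by
    intro n
    rw [hG]
    simp only [div_eq_mul_inv]
    rw [MeasureTheory.integral_mul_const, integral_Ioo_rpow (hexp n),
      show u + (n:ℝ) - 1 + 1 = u + n by ring]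
    have h := (hpos n).ne'
    field_simp
  have hnorm : ∀ n : ℕ, (∫ x in Ioo (0:ℝ) 1, ‖G n x‖) = 1 / (u + n) ^ 2 := by
    intro n
    rw [← hval n]
    refine setIntegral_congr_fun measurableSet_Ioo (fun y hy => ?_)
    exact Real.norm_of_nonneg
      (div_nonneg (Real.rpow_nonneg hy.1.le _) (hpos n).le)
  have hsum : Summable (fun n : ℕ => ∫ x in Ioo (0:ℝ) 1, ‖G n x‖) := by
    rw [show (fun n : ℕ => ∫ x in Ioo (0:ℝ) 1, ‖G n x‖)
        = fun n : ℕ => 1 / (u + n) ^ 2 from funext hnorm]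
    simpa [add_comm] using summable_inv_sq_add u hu
  calc (∫ x in (0:ℝ)..1, ∫ y in (0:ℝ)..1, (x * y) ^ (u - 1) / (1 - x * y))
      = ∫ x in Ioo (0:ℝ) 1, ∫ y in (0:ℝ)..1, (x * y) ^ (u - 1) / (1 - x * y) := by
        rw [intervalIntegral.integral_of_le zero_le_one,
          MeasureTheory.integral_Ioc_eq_integral_Ioo]
    _ = ∫ x in Ioo (0:ℝ) 1, ∑' n : ℕ, G n x :=
        setIntegral_congr_fun measurableSet_Ioo (fun x hx => inner_integral u x hu hx)
    _ = ∑' n : ℕ, ∫ x in Ioo (0:ℝ) 1, G n x :=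
        (MeasureTheory.integral_tsum_of_summable_integral_norm hint hsum).symm
    _ = ∑' n : ℕ, 1 / (u + (n:ℝ)) ^ 2 := tsum_congr hval


noncomputable def P (n : ℕ) (x : ℝ) : ℝ :=
  x * Real.log n + Real.log (n !) - ∑ k ∈ Finset.range (n+1), Real.log (x + k)

noncomputable def P' (n : ℕ) (x : ℝ) : ℝ :=
  Real.log n - ∑ k ∈ Finset.range (n+1), (x + k)⁻¹

noncomputable def P'' (n : ℕ) (x : ℝ) : ℝ :=
  ∑ k ∈ Finset.range (n+1), ((x + k)^2)⁻¹

noncomputable def gg (x : ℝ) : ℝ :=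
  -Real.eulerMascheroniConstant + ∑' k : ℕ, (((k:ℝ) + 1)⁻¹ - (x + k)⁻¹)

noncomputable def T (x : ℝ) : ℝ := ∑' k : ℕ, ((x + (k:ℝ))^2)⁻¹

lemma hasDerivAt_P (n : ℕ) (x : ℝ) (hx : 0 < x) : HasDerivAt (P n) (P' n x) x := by
  have h1 : HasDerivAt (fun x : ℝ => x * Real.log n + Real.log (n !)) (Real.log n) x :=
    (hasDerivAt_mul_const (Real.log n)).add_const _
  have h2 : HasDerivAt (fun x : ℝ => ∑ k ∈ Finset.range (n+1), Real.log (x + k))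
      (∑ k ∈ Finset.range (n+1), (x + k)⁻¹) x := by
    refine HasDerivAt.fun_sum (fun k _ => ?_)
    have hne : x + (k:ℝ) ≠ 0 := by positivity
    have := ((hasDerivAt_id x).add_const (k:ℝ)).log hne
    simpa using this
  exact h1.fun_sub h2

lemma hasDerivAt_P' (n : ℕ) (x : ℝ) (hx : 0 < x) : HasDerivAt (P' n) (P'' n x) x := by
  have h2 : HasDerivAt (fun x : ℝ => ∑ k ∈ Finset.range (n+1), (x + k)⁻¹)
      (∑ k ∈ Finset.range (n+1), -((x + k)^2)⁻¹) x := by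
    refine HasDerivAt.fun_sum (fun k _ => ?_)
    have hne : x + (k:ℝ) ≠ 0 := by positivity
    have := ((hasDerivAt_id x).add_const (k:ℝ)).inv hne
    simpa [neg_div, Pi.inv_def] using this
  have := (hasDerivAt_const x (Real.log n)).fun_sub h2
  exact this.congr_deriv (by simp [P'', Finset.sum_neg_distrib])

lemma tendsto_P (x : ℝ) (hx : 0 < x) :
    Tendsto (fun n => P n x) atTop (𝓝 (Real.log (Real.Gamma x))) := by
  have h := (Real.GammaSeq_tendsto_Gamma x).log (Real.Gamma_pos_of_pos hx).ne'
  refine h.congr' ?_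
  filter_upwards [eventually_ge_atTop 1] with n hn
  have hn0 : (0:ℝ) < n := by exact_mod_cast hn
  have hprod : (0:ℝ) < ∏ j ∈ Finset.range (n+1), (x + j) := by
    refine Finset.prod_pos (fun j _ => ?_)
    positivity
  have hnum : (0:ℝ) < (n:ℝ) ^ x * (n ! : ℝ) := by
    have := Nat.factorial_pos n
    positivity
  rw [Real.GammaSeq, Real.log_div hnum.ne' hprod.ne',
    Real.log_mul (by positivity) (by exact_mod_cast (Nat.factorial_pos n).ne'),
    Real.log_rpow hn0, Real.log_prod (fun j _ => by positivity)]
  rfl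

lemma tendsto_const_part :
    Tendsto (fun n : ℕ => Real.log n - ∑ k ∈ Finset.range (n+1), ((k:ℝ)+1)⁻¹)
      atTop (𝓝 (-Real.eulerMascheroniConstant)) := by
  have hharm : ∀ m : ℕ, ((harmonic m : ℚ) : ℝ) = ∑ k ∈ Finset.range m, ((k:ℝ)+1)⁻¹ := by
    intro m
    rw [harmonic]
    push_cast
    rfl
  have h1 : Tendsto (fun n : ℕ => -Real.eulerMascheroniSeq' n - ((n:ℝ)+1)⁻¹) atTop
      (𝓝 (-Real.eulerMascheroniConstant)) := by
    have := (Real.tendsto_eulerMascheroniSeq').neg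
    have h2 : Tendsto (fun n : ℕ => ((n:ℝ)+1)⁻¹) atTop (𝓝 0) := by
      have := tendsto_one_div_add_atTop_nhds_zero_nat (𝕜 := ℝ)
      simpa [one_div] using this
    simpa using this.sub h2
  refine h1.congr' ?_
  filter_upwards [eventually_ge_atTop 1] with n hn
  have hn0 : n ≠ 0 := by omega
  rw [Real.eulerMascheroniSeq', if_neg hn0]
  have : ∑ k ∈ Finset.range (n+1), ((k:ℝ)+1)⁻¹ = ((harmonic (n+1) : ℚ) : ℝ) := (hharm _).symm
  rw [this, harmonic_succ]
  push_cast
  ring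

lemma summable_t (x : ℝ) (hx : 0 < x) :
    Summable (fun k : ℕ => ((k:ℝ)+1)⁻¹ - (x + k)⁻¹) := by
  set c := min x 1 with hc
  have hc0 : 0 < c := lt_min hx one_pos
  refine Summable.of_norm (Summable.of_nonneg_of_le (fun k => norm_nonneg _) (fun k => ?_)
    (((summable_inv_sq_add c hc0).mul_left |x - 1|)))
  have hk0 : (0:ℝ) ≤ k := Nat.cast_nonneg k
  have h1 : (0:ℝ) < (k:ℝ)+1 := by positivity
  have h2 : (0:ℝ) < x + k := by positivity
  have heq : ((k:ℝ)+1)⁻¹ - (x + k)⁻¹ = (x - 1) * (((k:ℝ)+1) * (x + k))⁻¹ := by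
    field_simp
    ring
  rw [heq, norm_mul, norm_inv]
  have hcx : c ≤ x := min_le_left _ _
  have hc1 : c ≤ 1 := min_le_right _ _
  have hsq : ((k:ℝ)+c)^2 ≤ ((k:ℝ)+1) * (x + k) := by nlinarith
  have hpos : (0:ℝ) < ((k:ℝ)+c)^2 := by positivity
  gcongr
  · rw [Real.norm_eq_abs]
  rw [Real.norm_of_nonneg (by positivity : (0:ℝ) ≤ ((k:ℝ)+1) * (x+k))]
  calc (((k:ℝ)+1) * (x + k))⁻¹ ≤ (((k:ℝ)+c)^2)⁻¹ := by
        apply inv_anti₀ hpos hsq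
    _ = 1 / ((k:ℝ)+c)^2 := by rw [one_div]


variable {f : ℕ → ℝ → ℝ} {g : ℝ → ℝ} {s : Set ℝ}

lemma TUO_shift (h : TendstoUniformlyOn f g atTop s) :
    TendstoUniformlyOn (fun n => f (n+1)) g atTop s := by
  intro u hu
  exact (tendsto_add_atTop_nat 1).eventually (h u hu)

lemma tlu (F : ℕ → ℝ → ℝ) (G : ℝ → ℝ)
    (h : ∀ a b : ℝ, 0 < a → TendstoUniformlyOn F G atTop (Icc a b)) :
    TendstoLocallyUniformlyOn F G atTop (Ioi 0) := by
  rw [tendstoLocallyUniformlyOn_iff_forall_isCompact isOpen_Ioi]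
  intro K hK hKc
  rcases K.eq_empty_or_nonempty with rfl | hne
  · exact (h 1 1 one_pos).mono (empty_subset _)
  · have ha : sInf K ∈ K := hKc.sInf_mem hne
    refine (h (sInf K) (sSup K) (hK ha)).mono ?_
    exact fun x hx => ⟨csInf_le hKc.bddBelow hx, le_csSup hKc.bddAbove hx⟩

-- uniform convergence of partial sums of t on Icc a b
lemma unif_t (a b : ℝ) (ha : 0 < a) :
    TendstoUniformlyOn (fun n (x:ℝ) => ∑ k ∈ Finset.range n, (((k:ℝ)+1)⁻¹ - (x + k)⁻¹))
      (fun (x:ℝ) => ∑' k : ℕ, (((k:ℝ)+1)⁻¹ - (x + k)⁻¹)) atTop (Icc a b) := by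
  set c := min a 1 with hc
  have hc0 : 0 < c := lt_min ha one_pos
  set C := max |a - 1| |b - 1| with hC
  refine tendstoUniformlyOn_tsum_nat
    (((summable_inv_sq_add c hc0).mul_left C)) (fun k x hx => ?_)
  obtain ⟨hxa, hxb⟩ := hx
  have hx0 : 0 < x := lt_of_lt_of_le ha hxa
  have hk0 : (0:ℝ) ≤ k := Nat.cast_nonneg k
  have h1 : (0:ℝ) < (k:ℝ)+1 := by positivity
  have h2 : (0:ℝ) < x + k := by positivity
  have heq : ((k:ℝ)+1)⁻¹ - (x + k)⁻¹ = (x - 1) * (((k:ℝ)+1) * (x + k))⁻¹ := by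
    field_simp; ring
  rw [heq, norm_mul, norm_inv]
  have hcx : c ≤ x := le_trans (min_le_left _ _) hxa
  have hc1 : c ≤ 1 := min_le_right _ _
  have hsq : ((k:ℝ)+c)^2 ≤ ((k:ℝ)+1) * (x + k) := by nlinarith
  have hxC : ‖x - 1‖ ≤ C := by
    rw [Real.norm_eq_abs]
    exact abs_le_max_abs_abs (sub_le_sub_right hxa 1) (sub_le_sub_right hxb 1)
  have hpos : (0:ℝ) < ((k:ℝ)+c)^2 := by positivity
  have hnorm : ‖(((k:ℝ)+1) * (x + k))⁻¹‖ ≤ 1 / ((k:ℝ)+c)^2 := by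
    rw [norm_inv, Real.norm_of_nonneg (by positivity : (0:ℝ) ≤ ((k:ℝ)+1) * (x+k)), one_div]
    exact inv_anti₀ hpos hsq
  rw [← norm_inv]
  exact mul_le_mul hxC hnorm (norm_nonneg _) (le_trans (norm_nonneg _) hxC)

lemma unif_sq (a b : ℝ) (ha : 0 < a) :
    TendstoUniformlyOn (fun n (x:ℝ) => ∑ k ∈ Finset.range n, ((x + (k:ℝ))^2)⁻¹)
      (fun (x:ℝ) => ∑' k : ℕ, ((x + (k:ℝ))^2)⁻¹) atTop (Icc a b) := by
  refine tendstoUniformlyOn_tsum_nat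
    (by simpa [one_div] using summable_inv_sq_add a ha) (fun k x hx => ?_)
  have hk0 : (0:ℝ) ≤ k := Nat.cast_nonneg k
  have hx0 : 0 < x := lt_of_lt_of_le ha hx.1
  have h2 : (0:ℝ) < x + k := by positivity
  have hak : (0:ℝ) < (k:ℝ) + a := by positivity
  rw [norm_inv, Real.norm_of_nonneg (by positivity : (0:ℝ) ≤ (x + (k:ℝ))^2)]
  have hsq : ((k:ℝ)+a)^2 ≤ (x + (k:ℝ))^2 := by nlinarith [hx.1]
  exact inv_anti₀ (by positivity) hsq


lemma P'_decomp (n : ℕ) (x : ℝ) :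
    P' n x = (Real.log n - ∑ k ∈ Finset.range (n+1), ((k:ℝ)+1)⁻¹)
      + ∑ k ∈ Finset.range (n+1), (((k:ℝ)+1)⁻¹ - (x + k)⁻¹) := by
  rw [P', Finset.sum_sub_distrib]
  ring

lemma hP'unif (a b : ℝ) (ha : 0 < a) : TendstoUniformlyOn P' gg atTop (Icc a b) := by
  have h1 : TendstoUniformlyOn
      (fun (n : ℕ) (_ : ℝ) => Real.log n - ∑ k ∈ Finset.range (n+1), ((k:ℝ)+1)⁻¹)
      (fun _ => -Real.eulerMascheroniConstant) atTop (Icc a b) :=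
    tendsto_const_part.tendstoUniformlyOn_const _
  have h2 := TUO_shift (unif_t a b ha)
  have h3 := h1.add h2
  refine h3.congr ?_
  filter_upwards with n
  intro x _
  simp only [Pi.add_apply]
  exact (P'_decomp n x).symm

lemma hP'pt (x : ℝ) (hx : 0 < x) : Tendsto (fun n => P' n x) atTop (𝓝 (gg x)) := by
  have h2 : Tendsto (fun n : ℕ => ∑ k ∈ Finset.range (n+1), (((k:ℝ)+1)⁻¹ - (x + k)⁻¹))
      atTop (𝓝 (∑' k : ℕ, (((k:ℝ)+1)⁻¹ - (x + k)⁻¹))) :=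
    ((summable_t x hx).hasSum.tendsto_sum_nat).comp (tendsto_add_atTop_nat 1)
  have h3 := tendsto_const_part.add h2
  refine h3.congr (fun n => (P'_decomp n x).symm)

lemma deriv_psi (u : ℝ) (hu : 0 < u) :
    deriv (fun t : ℝ => deriv Real.Gamma t / Real.Gamma t) u = T u := by
  have hlogD : ∀ x ∈ Ioi (0:ℝ), HasDerivAt (fun y => Real.log (Real.Gamma y)) (gg x) x := by
    intro x hx
    refine hasDerivAt_of_tendstoLocallyUniformlyOn isOpen_Ioi (tlu _ _ hP'unif)
      (Eventually.of_forall (fun n y hy => hasDerivAt_P n y hy))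
      (fun y hy => tendsto_P y hy) hx
  have hψeq : ∀ x ∈ Ioi (0:ℝ), deriv Real.Gamma x / Real.Gamma x = gg x := by
    intro x hx
    have hne : ∀ m : ℕ, x ≠ -(m:ℝ) := by
      intro m
      have h1 : -(m:ℝ) < x := lt_of_le_of_lt (neg_nonpos.mpr (Nat.cast_nonneg m)) hx
      exact ne_of_gt h1
    have hΓ : DifferentiableAt ℝ Real.Gamma x := Real.differentiableAt_Gamma hne
    have h2 := hΓ.hasDerivAt.log (Real.Gamma_pos_of_pos hx).ne'
    exact h2.unique (hlogD x hx)
  have hggD : HasDerivAt gg (T u) u := by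
    refine hasDerivAt_of_tendstoLocallyUniformlyOn isOpen_Ioi
      (tlu P'' T (fun a b ha => TUO_shift (unif_sq a b ha)))
      (Eventually.of_forall (fun n y hy => hasDerivAt_P' n y hy))
      (fun y hy => hP'pt y hy) hu
  have hev : (fun t : ℝ => deriv Real.Gamma t / Real.Gamma t) =ᶠ[𝓝 u] gg :=
    eventually_of_mem (isOpen_Ioi.mem_nhds hu) (fun x hx => hψeq x hx)
  rw [hev.deriv_eq, hggD.deriv]

end DIT

theorem double_integral_trigamma (u : ℝ) (hu : 0 < u) :
    (∫ x in (0:ℝ)..1, ∫ y in (0:ℝ)..1, (x * y) ^ (u - 1) / (1 - x * y)) =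
      deriv (fun t : ℝ => deriv Real.Gamma t / Real.Gamma t) u := by
  rw [DIT.lhs_eq u hu, DIT.deriv_psi u hu, DIT.T]
  exact tsum_congr (fun n => one_div _)
end

section
/- For real u > 0, ∫_0^1 ∫_0^1 (1−x)(xy)^(u−1)/((1−xy)(−ln(xy))) dx dy = ln u − ψ(u), where ψ is the digamma function. -/
open MeasureTheory Real Set Filter intervalIntegral
open scoped ENNReal

namespace DblIntAux

/-- exp-form of `t ^ (u-1)`. -/
noncomputable def pw (u t : ℝ) : ℝ := Real.exp ((u - 1) * Real.log t)

/-- the function `1/(1-t) + 1/log t`. -/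
noncomputable def hh (t : ℝ) : ℝ := (1 - t)⁻¹ + (Real.log t)⁻¹

/-- the single-variable integral. -/
noncomputable def G (u : ℝ) : ℝ := ∫ t in Ioo (0:ℝ) 1, pw u t * hh t

lemma pw_eq_rpow {u t : ℝ} (ht : 0 < t) : t ^ (u - 1) = pw u t := by
  rw [pw, Real.rpow_def_of_pos ht, mul_comm]

lemma pw_pos (u : ℝ) (t : ℝ) : 0 < pw u t := Real.exp_pos _

lemma measurable_pw (u : ℝ) : Measurable (pw u) :=
  (measurable_const.mul Real.measurable_log).exp

lemma measurable_hh : Measurable hh :=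
  ((measurable_const.sub measurable_id).inv).add Real.measurable_log.inv

lemma hh_nonneg {t : ℝ} (h0 : 0 < t) (h1 : t < 1) : 0 ≤ hh t := by
  have hL : Real.log t < 0 := Real.log_neg h0 h1
  have h2 : Real.log t ≤ t - 1 := Real.log_le_sub_one_of_pos h0
  have h3 : (-Real.log t)⁻¹ ≤ (1 - t)⁻¹ := by
    apply inv_anti₀ (by linarith) (by linarith)
  rw [inv_neg] at h3
  rw [hh]; linarith

lemma hh_le_one {t : ℝ} (h0 : 0 < t) (h1 : t < 1) : hh t ≤ 1 := by
  have hL : Real.log t < 0 := Real.log_neg h0 h1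
  have h2 : Real.log t⁻¹ ≤ t⁻¹ - 1 := Real.log_le_sub_one_of_pos (by positivity)
  rw [Real.log_inv] at h2
  set m : ℝ := -Real.log t with hm
  set a : ℝ := 1 - t with ha
  have hmpos : 0 < m := by simp [hm]; linarith
  have hapos : 0 < a := by simp [ha]; linarith
  have hmt : m * t ≤ a := by
    have ht' : t⁻¹ * t = 1 := inv_mul_cancel₀ h0.ne'
    nlinarith
  have key : m - a ≤ a * m := by nlinarith
  have hL' : Real.log t = -m := by rw [hm, neg_neg]
  have heq : hh t = (m - a) / (a * m) := by
    rw [hh, hL', ← ha]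
    rw [eq_div_iff (by positivity : a * m ≠ 0), inv_neg]
    field_simp
    ring
  rw [heq, div_le_one (by positivity : (0:ℝ) < a * m)]
  exact key

lemma integrableOn_pw {u : ℝ} (hu : 0 < u) : IntegrableOn (pw u) (Ioo (0:ℝ) 1) := by
  have h1 : IntervalIntegrable (fun t : ℝ => t ^ (u - 1)) volume 0 1 :=
    intervalIntegral.intervalIntegrable_rpow' (by linarith)
  have h2 : IntegrableOn (fun t : ℝ => t ^ (u - 1)) (Ioo (0:ℝ) 1) :=
    (h1.1).mono_set Ioo_subset_Ioc_self
  exact h2.congr_fun (fun t ht => pw_eq_rpow ht.1) measurableSet_Ioo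

lemma integral_pw {u : ℝ} (hu : 0 < u) : ∫ t in Ioo (0:ℝ) 1, pw u t = 1 / u := by
  have h1 : ∫ t in (0:ℝ)..1, t ^ (u - 1) = 1 / u := by
    rw [integral_rpow (Or.inl (by linarith))]
    rw [Real.one_rpow, Real.zero_rpow (by linarith : u - 1 + 1 ≠ 0)]
    rw [sub_add_cancel]
    norm_num
  rw [intervalIntegral.integral_of_le zero_le_one, integral_Ioc_eq_integral_Ioo] at h1
  rw [← h1]
  exact setIntegral_congr_fun measurableSet_Ioo (fun t ht => (pw_eq_rpow ht.1).symm)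

lemma integrableOn_pw_hh {u : ℝ} (hu : 0 < u) :
    IntegrableOn (fun t => pw u t * hh t) (Ioo (0:ℝ) 1) := by
  refine (integrableOn_pw hu).mono' ?_ ?_
  · exact ((measurable_pw u).mul measurable_hh).aestronglyMeasurable
  · refine (ae_restrict_iff' measurableSet_Ioo).2 (ae_of_all _ fun t ht => ?_)
    have h1 := hh_nonneg ht.1 ht.2
    have h2 := hh_le_one ht.1 ht.2
    have h3 := pw_pos u t
    rw [Real.norm_eq_abs, abs_of_nonneg (by positivity)]
    nlinarith

lemma G_nonneg {u : ℝ} (hu : 0 < u) : 0 ≤ G u :=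
  setIntegral_nonneg measurableSet_Ioo fun t ht =>
    mul_nonneg (pw_pos u t).le (hh_nonneg ht.1 ht.2)

lemma G_le {u : ℝ} (hu : 0 < u) : G u ≤ 1 / u := by
  rw [← integral_pw hu]
  refine setIntegral_mono_on (integrableOn_pw_hh hu) (integrableOn_pw hu)
    measurableSet_Ioo fun t ht => ?_
  have h2 := hh_le_one ht.1 ht.2
  have h3 := pw_pos u t
  nlinarith

lemma pw_anti {t : ℝ} (h0 : 0 < t) (h1 : t < 1) {a b : ℝ} (hab : a ≤ b) :
    pw b t ≤ pw a t := by
  have hL : Real.log t < 0 := Real.log_neg h0 h1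
  exact Real.exp_le_exp.mpr (by nlinarith)

lemma integral_pw_exponent {t : ℝ} (h0 : 0 < t) (h1 : t < 1) (u : ℝ) :
    ∫ s in u..(u+1), pw s t = (pw u t - pw (u+1) t) / (-Real.log t) := by
  set L := Real.log t with hLdef
  have hL : L < 0 := Real.log_neg h0 h1
  have h2 : (fun s : ℝ => pw s t) = fun s => Real.exp (-L) * Real.exp (L * s) := by
    funext s; rw [pw, ← Real.exp_add, ← hLdef]; congr 1; ring
  rw [h2, intervalIntegral.integral_const_mul,
    intervalIntegral.integral_comp_mul_left (fun x => Real.exp x) hL.ne,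
    integral_exp, pw, pw, smul_eq_mul, ← hLdef]
  have k1 : Real.exp (L * (u + 1)) = Real.exp (L * u) * Real.exp L := by
    rw [← Real.exp_add]; congr 1; ring
  have k2 : Real.exp ((u - 1) * L) = Real.exp (L * u) * Real.exp (-L) := by
    rw [← Real.exp_add]; congr 1; ring
  have k3 : (u + 1 - 1) * L = L * u := by ring
  rw [k1, k2, k3]
  have k4 : Real.exp L * Real.exp (-L) = 1 := by rw [← Real.exp_add]; simp
  have hLne : L ≠ 0 := hL.ne
  rw [div_neg, ← neg_div, eq_div_iff hLne]
  field_simp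
  linear_combination k4

lemma frullani {u : ℝ} (hu : 0 < u) :
    ∫ t in Ioo (0:ℝ) 1, (pw u t - pw (u + 1) t) / (-Real.log t) =
      Real.log (u + 1) - Real.log u := by
  have hmeas : Measurable fun t : ℝ => (pw u t - pw (u + 1) t) / (-Real.log t) :=
    ((measurable_pw u).sub (measurable_pw (u + 1))).div Real.measurable_log.neg
  have hnn : ∀ t ∈ Ioo (0:ℝ) 1, 0 ≤ (pw u t - pw (u + 1) t) / (-Real.log t) := by
    intro t ht
    have h1 := pw_anti ht.1 ht.2 (by linarith : u ≤ u + 1)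
    have hL := Real.log_neg ht.1 ht.2
    apply div_nonneg (by linarith) (by linarith)
  rw [integral_eq_lintegral_of_nonneg_ae
    ((ae_restrict_iff' measurableSet_Ioo).2 (ae_of_all _ hnn))
    hmeas.aestronglyMeasurable]
  have key : ∀ t ∈ Ioo (0:ℝ) 1,
      ENNReal.ofReal ((pw u t - pw (u + 1) t) / (-Real.log t)) =
        ∫⁻ s in Ioo u (u + 1), ENNReal.ofReal (pw s t) := by
    intro t ht
    rw [← integral_pw_exponent ht.1 ht.2 u,
      intervalIntegral.integral_of_le (by linarith : u ≤ u + 1), integral_Ioc_eq_integral_Ioo,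
      ofReal_integral_eq_lintegral_ofReal]
    · have hcont : Continuous fun s : ℝ => pw s t := by
        unfold pw
        exact ((continuous_id.sub continuous_const).mul continuous_const).rexp
      exact (hcont.integrableOn_Icc).mono_set Ioo_subset_Icc_self
    · exact (ae_restrict_iff' measurableSet_Ioo).2 (ae_of_all _ fun s _ => (pw_pos s t).le)
  rw [setLIntegral_congr_fun_ae measurableSet_Ioo (ae_of_all _ key)]
  have hswap : ∫⁻ t in Ioo (0:ℝ) 1, ∫⁻ s in Ioo u (u + 1), ENNReal.ofReal (pw s t) =
      ∫⁻ s in Ioo u (u + 1), ∫⁻ t in Ioo (0:ℝ) 1, ENNReal.ofReal (pw s t) := by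
    apply lintegral_lintegral_swap
    apply Measurable.aemeasurable
    apply Measurable.ennreal_ofReal
    unfold pw
    exact ((measurable_snd.sub measurable_const).mul
      (Real.measurable_log.comp measurable_fst)).exp
  rw [hswap]
  have key2 : ∀ s ∈ Ioo u (u + 1),
      (∫⁻ t in Ioo (0:ℝ) 1, ENNReal.ofReal (pw s t)) = ENNReal.ofReal (1 / s) := by
    intro s hs
    have hs0 : 0 < s := lt_trans hu hs.1
    rw [← integral_pw hs0]
    rw [← ofReal_integral_eq_lintegral_ofReal (integrableOn_pw hs0)
      ((ae_restrict_iff' measurableSet_Ioo).2 (ae_of_all _ fun t _ => (pw_pos s t).le))]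
  rw [setLIntegral_congr_fun_ae measurableSet_Ioo (ae_of_all _ key2)]
  have key3 : (∫⁻ s in Ioo u (u + 1), ENNReal.ofReal (1 / s)) =
      ENNReal.ofReal (Real.log (u + 1) - Real.log u) := by
    have hint : IntegrableOn (fun s : ℝ => 1 / s) (Ioo u (u + 1)) := by
      apply (ContinuousOn.integrableOn_Icc ?_).mono_set Ioo_subset_Icc_self
      exact ContinuousOn.div continuousOn_const continuousOn_id
        (fun s hs => by rintro rfl; exact absurd hs.1 (not_le.mpr hu))
    rw [← ofReal_integral_eq_lintegral_ofReal hint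
      ((ae_restrict_iff' measurableSet_Ioo).2 (ae_of_all _ fun s hs => by
        have : 0 < s := lt_trans hu hs.1
        positivity))]
    congr 1
    have : ∫ s in Ioo u (u + 1), (1:ℝ) / s = ∫ s in u..(u+1), 1 / s := by
      rw [intervalIntegral.integral_of_le (by linarith : u ≤ u + 1),
        integral_Ioc_eq_integral_Ioo]
    rw [this]
    simp only [one_div]
    rw [integral_inv_of_pos hu (by linarith : (0:ℝ) < u + 1)]
    rw [Real.log_div (by linarith) (ne_of_gt hu)]
  rw [key3, ENNReal.toReal_ofReal]
  have := Real.log_le_log hu (by linarith : u ≤ u + 1)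
  linarith

lemma pw_succ {t : ℝ} (h0 : 0 < t) (u : ℝ) : pw (u + 1) t = pw u t * t := by
  conv_lhs => rw [pw]
  conv_rhs => rw [pw, ← Real.exp_log h0, ← Real.exp_add]
  rw [Real.exp_log h0]
  congr 1
  ring

lemma integrableOn_diff_div {u : ℝ} (hu : 0 < u) :
    IntegrableOn (fun t => (pw u t - pw (u + 1) t) / (-Real.log t)) (Ioo (0:ℝ) 1) := by
  refine (integrableOn_pw hu).mono' ?_ ?_
  · exact (((measurable_pw u).sub (measurable_pw (u + 1))).div
      Real.measurable_log.neg).aestronglyMeasurable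
  · refine (ae_restrict_iff' measurableSet_Ioo).2 (ae_of_all _ fun t ht => ?_)
    have hL : Real.log t < 0 := Real.log_neg ht.1 ht.2
    have hLs : Real.log t ≤ t - 1 := Real.log_le_sub_one_of_pos ht.1
    have hE : 0 < pw u t := pw_pos u t
    have hnum : pw u t - pw (u + 1) t = pw u t * (1 - t) := by
      rw [pw_succ ht.1]; ring
    rw [Real.norm_eq_abs, abs_of_nonneg (by
      apply div_nonneg _ (by linarith)
      rw [hnum]; nlinarith [ht.2])]
    rw [div_le_iff₀ (by linarith : (0:ℝ) < -Real.log t), hnum]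
    nlinarith [ht.2]

lemma G_rec {u : ℝ} (hu : 0 < u) :
    G u - G (u + 1) = 1 / u - (Real.log (u + 1) - Real.log u) := by
  have h1 : G u - G (u + 1) =
      ∫ t in Ioo (0:ℝ) 1, (pw u t * hh t - pw (u + 1) t * hh t) := by
    rw [G, G, ← integral_sub (integrableOn_pw_hh hu) (integrableOn_pw_hh (by linarith))]
  have h2 : ∀ t ∈ Ioo (0:ℝ) 1, pw u t * hh t - pw (u + 1) t * hh t =
      pw u t - (pw u t - pw (u + 1) t) / (-Real.log t) := by
    intro t ht
    have hL : Real.log t < 0 := Real.log_neg ht.1 ht.2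
    have ht1 : (1:ℝ) - t ≠ 0 := by have := ht.2; intro h; linarith [sub_eq_zero.mp h]
    rw [pw_succ ht.1, hh]
    field_simp
    ring
  rw [h1, setIntegral_congr_fun measurableSet_Ioo h2,
    integral_sub (integrableOn_pw hu) (integrableOn_diff_div hu),
    integral_pw hu, frullani hu]

/-! ### Part A : reduction of the double integral -/

/-- exp-form of the inner kernel. -/
noncomputable def f0 (u t : ℝ) : ℝ := pw u t / ((1 - t) * (-Real.log t))

lemma measurable_f0 (u : ℝ) : Measurable (f0 u) :=
  (measurable_pw u).div ((measurable_const.sub measurable_id).mul Real.measurable_log.neg)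

lemma f0_nonneg {u t : ℝ} (h0 : 0 < t) (h1 : t < 1) : 0 ≤ f0 u t := by
  have hL : Real.log t < 0 := Real.log_neg h0 h1
  have := pw_pos u t
  apply div_nonneg this.le
  nlinarith

/-- `f0` multiplied by the weight gives the `G`-integrand. -/
lemma f0_mul_weight {u t : ℝ} (h0 : 0 < t) (h1 : t < 1) :
    f0 u t * (-Real.log t - (1 - t)) = pw u t * hh t := by
  have hL : Real.log t < 0 := Real.log_neg h0 h1
  have ht1 : (1:ℝ) - t ≠ 0 := by intro h; have := sub_eq_zero.mp h; linarith
  have hLne : Real.log t ≠ 0 := ne_of_lt hL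
  have key : (-Real.log t - (1 - t)) / ((1 - t) * -Real.log t) =
      (1 - t)⁻¹ + (Real.log t)⁻¹ := by
    field_simp
    ring
  rw [f0, hh, div_mul_eq_mul_div, mul_div_assoc, key]

noncomputable def Jx (u x : ℝ) : ℝ≥0∞ := ∫⁻ t in Ioo 0 x, ENNReal.ofReal (f0 u t)

lemma Jx_mono (u : ℝ) : Monotone (Jx u) := fun x x' h =>
  lintegral_mono_set (Ioo_subset_Ioo_right h)

lemma measurable_Jx (u : ℝ) : Measurable (Jx u) := (Jx_mono u).measurable

lemma integrableOn_f0 {u x : ℝ} (hu : 0 < u) (hx : x ∈ Ioo (0:ℝ) 1) :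
    IntegrableOn (f0 u) (Ioo 0 x) := by
  have hc1 : (0:ℝ) < 1 - x := by have := hx.2; linarith
  have hc2 : (0:ℝ) < -Real.log x := by have := Real.log_neg hx.1 hx.2; linarith
  set C : ℝ := ((1 - x) * (-Real.log x))⁻¹ with hC
  have hCpos : 0 < C := by positivity
  refine Integrable.mono' (((integrableOn_pw hu).mono_set
    (Ioo_subset_Ioo_right hx.2.le)).const_mul C) (measurable_f0 u).aestronglyMeasurable ?_
  refine (ae_restrict_iff' measurableSet_Ioo).2 (ae_of_all _ fun t ht => ?_)
  have ht1 : t < 1 := lt_trans ht.2 hx.2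
  have hL : -Real.log t ≥ -Real.log x := by
    have := Real.log_le_log ht.1 ht.2.le
    linarith
  have h1t : 1 - t ≥ 1 - x := by have := ht.2; linarith
  have hpos := pw_pos u t
  rw [Real.norm_eq_abs, abs_of_nonneg (f0_nonneg ht.1 ht1), f0, hC]
  have hBD : (1 - x) * (-Real.log x) ≤ (1 - t) * (-Real.log t) := by nlinarith
  have hCB : ((1 - x) * (-Real.log x))⁻¹ * ((1 - x) * (-Real.log x)) = 1 :=
    inv_mul_cancel₀ (by positivity)
  rw [div_le_iff₀ (by nlinarith : (0:ℝ) < (1 - t) * (-Real.log t))]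
  nlinarith [mul_le_mul_of_nonneg_left hBD (le_of_lt hCpos), hpos,
    mul_pos hc1 hc2]

lemma Jx_eq {u x : ℝ} (hu : 0 < u) (hx : x ∈ Ioo (0:ℝ) 1) :
    Jx u x = ENNReal.ofReal (∫ t in Ioo 0 x, f0 u t) :=
  (ofReal_integral_eq_lintegral_ofReal (integrableOn_f0 hu hx)
    ((ae_restrict_iff' measurableSet_Ioo).2 (ae_of_all _ fun t ht =>
      f0_nonneg ht.1 (lt_trans ht.2 hx.2)))).symm

lemma Jx_ne_top {u x : ℝ} (hu : 0 < u) (hx : x ∈ Ioo (0:ℝ) 1) : Jx u x ≠ ⊤ := by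
  rw [Jx_eq hu hx]; exact ENNReal.ofReal_ne_top

/-- Inner integral computation. -/
lemma inner_eq {u x : ℝ} (hu : 0 < u) (hx : x ∈ Ioo (0:ℝ) 1) :
    (∫ y in (0:ℝ)..1, (1 - x) * (x * y) ^ (u - 1) / ((1 - x * y) * (-Real.log (x * y)))) =
      (1 - x) * x⁻¹ * (Jx u x).toReal := by
  have hx0 : (0:ℝ) < x := hx.1
  have step1 : (fun y => (1 - x) * (x * y) ^ (u - 1) / ((1 - x * y) * (-Real.log (x * y)))) =
      fun y => (1 - x) * ((fun t => t ^ (u - 1) / ((1 - t) * (-Real.log t))) (x * y)) := by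
    funext y
    simp only [mul_div_assoc]
  rw [step1, intervalIntegral.integral_const_mul,
    intervalIntegral.integral_comp_mul_left
      (fun t => t ^ (u - 1) / ((1 - t) * (-Real.log t))) hx0.ne']
  rw [mul_zero, mul_one, smul_eq_mul]
  have step2 : (∫ t in (0:ℝ)..x, t ^ (u - 1) / ((1 - t) * (-Real.log t))) =
      ∫ t in Ioo (0:ℝ) x, f0 u t := by
    rw [intervalIntegral.integral_of_le hx0.le, integral_Ioc_eq_integral_Ioo]
    exact setIntegral_congr_fun measurableSet_Ioo fun t ht => by
      rw [f0, pw_eq_rpow ht.1]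
  rw [step2, Jx_eq hu hx, ENNReal.toReal_ofReal (setIntegral_nonneg measurableSet_Ioo
    fun t ht => f0_nonneg ht.1 (lt_trans ht.2 hx.2))]
  ring

/-- the kernel for the Tonelli swap. -/
noncomputable def W (u : ℝ) : ℝ × ℝ → ℝ≥0∞ := fun p =>
  Set.indicator {q : ℝ × ℝ | q.2 < q.1}
    (fun q => ENNReal.ofReal ((1 - q.1) * q.1⁻¹) * ENNReal.ofReal (f0 u q.2)) p

lemma measurable_W (u : ℝ) : Measurable (W u) := by
  apply Measurable.indicator
  · exact (((measurable_const.sub measurable_fst).mul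
      measurable_fst.inv).ennreal_ofReal).mul ((measurable_f0 u).comp measurable_snd).ennreal_ofReal
  · exact measurableSet_lt measurable_snd measurable_fst

lemma W_section_x {u x : ℝ} (hx : x ∈ Ioo (0:ℝ) 1) :
    (∫⁻ t in Ioo (0:ℝ) 1, W u (x, t)) =
      ENNReal.ofReal ((1 - x) * x⁻¹) * Jx u x := by
  have hfun : (fun t => W u (x, t)) =
      (Iio x).indicator (fun t => ENNReal.ofReal ((1 - x) * x⁻¹) * ENNReal.ofReal (f0 u t)) := by
    funext t
    by_cases h : t < x
    · rw [W, Set.indicator_of_mem (by exact h), Set.indicator_of_mem (by exact h)]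
    · rw [W, Set.indicator_of_notMem (by exact h), Set.indicator_of_notMem (by exact h)]
  rw [hfun, lintegral_indicator measurableSet_Iio, Measure.restrict_restrict measurableSet_Iio]
  have hset : Iio x ∩ Ioo (0:ℝ) 1 = Ioo 0 x := by
    ext z
    constructor
    · rintro ⟨h1, h2, h3⟩; exact ⟨h2, h1⟩
    · rintro ⟨h1, h2⟩; exact ⟨h2, h1, lt_trans h2 hx.2⟩
  rw [hset, Jx, lintegral_const_mul _ ((measurable_f0 u).ennreal_ofReal)]

lemma W_section_t {u t : ℝ} (ht : t ∈ Ioo (0:ℝ) 1) :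
    (∫⁻ x in Ioo (0:ℝ) 1, W u (x, t)) =
      (∫⁻ x in Ioo t 1, ENNReal.ofReal ((1 - x) * x⁻¹)) * ENNReal.ofReal (f0 u t) := by
  have hfun : (fun x => W u (x, t)) =
      (Ioi t).indicator (fun x => ENNReal.ofReal ((1 - x) * x⁻¹) * ENNReal.ofReal (f0 u t)) := by
    funext x
    by_cases h : t < x
    · rw [W, Set.indicator_of_mem (by exact h), Set.indicator_of_mem (by exact h)]
    · rw [W, Set.indicator_of_notMem (by exact h), Set.indicator_of_notMem (by exact h)]
  rw [hfun, lintegral_indicator measurableSet_Ioi, Measure.restrict_restrict measurableSet_Ioi]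
  have hset : Ioi t ∩ Ioo (0:ℝ) 1 = Ioo t 1 := by
    ext z
    constructor
    · rintro ⟨h1, h2, h3⟩; exact ⟨h1, h3⟩
    · rintro ⟨h1, h2⟩; exact ⟨h1, lt_trans ht.1 h1, h2⟩
  have hm : Measurable fun a : ℝ => ENNReal.ofReal ((1 - a) * a⁻¹) :=
    ((measurable_const.sub measurable_id).mul measurable_id.inv).ennreal_ofReal
  rw [hset, lintegral_mul_const _ hm]

lemma weight_lintegral {t : ℝ} (ht : t ∈ Ioo (0:ℝ) 1) :
    (∫⁻ x in Ioo t 1, ENNReal.ofReal ((1 - x) * x⁻¹)) =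
      ENNReal.ofReal (-Real.log t - (1 - t)) := by
  have ht0 : (0:ℝ) < t := ht.1
  have hint : IntegrableOn (fun x : ℝ => (1 - x) * x⁻¹) (Ioo t 1) := by
    apply (ContinuousOn.integrableOn_Icc ?_).mono_set Ioo_subset_Icc_self
    apply ContinuousOn.mul ((continuous_const.sub continuous_id).continuousOn)
    exact ContinuousOn.inv₀ continuousOn_id fun x hx => ne_of_gt (lt_of_lt_of_le ht0 hx.1)
  rw [← ofReal_integral_eq_lintegral_ofReal hint
    ((ae_restrict_iff' measurableSet_Ioo).2 (ae_of_all _ fun x hx => by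
      have h1 : 0 < x := lt_trans ht0 hx.1
      have h2 : x < 1 := hx.2
      have : 0 ≤ 1 - x := by linarith
      positivity))]
  congr 1
  have hIoo : (∫ x in Ioo t 1, (1 - x) * x⁻¹) = ∫ x in t..1, (1 - x) * x⁻¹ := by
    rw [intervalIntegral.integral_of_le ht.2.le, integral_Ioc_eq_integral_Ioo]
  rw [hIoo]
  have hcongr : ∫ x in t..1, (1 - x) * x⁻¹ = ∫ x in t..1, (x⁻¹ - 1) := by
    apply intervalIntegral.integral_congr
    intro x hx
    rw [uIcc_of_le ht.2.le] at hx
    have hx0 : (0:ℝ) < x := lt_of_lt_of_le ht0 hx.1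
    field_simp
  have hinv : IntervalIntegrable (fun x : ℝ => x⁻¹) volume t 1 := by
    apply ContinuousOn.intervalIntegrable
    apply ContinuousOn.inv₀ continuousOn_id
    intro x hx
    rw [uIcc_of_le ht.2.le] at hx
    exact ne_of_gt (lt_of_lt_of_le ht0 hx.1)
  rw [hcongr, intervalIntegral.integral_sub hinv intervalIntegrable_const,
    integral_inv_of_pos ht0 one_pos, intervalIntegral.integral_const, one_div,
    Real.log_inv, smul_eq_mul, mul_one]

/-- The reduction of the double integral to the single integral `G`. -/
lemma lhs_eq_G {u : ℝ} (hu : 0 < u) :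
    (∫ x in (0:ℝ)..1, ∫ y in (0:ℝ)..1,
        (1 - x) * (x * y) ^ (u - 1) / ((1 - x * y) * (-Real.log (x * y)))) = G u := by
  rw [intervalIntegral.integral_of_le zero_le_one, integral_Ioc_eq_integral_Ioo]
  have step1 : (∫ x in Ioo (0:ℝ) 1, ∫ y in (0:ℝ)..1,
      (1 - x) * (x * y) ^ (u - 1) / ((1 - x * y) * (-Real.log (x * y)))) =
      ∫ x in Ioo (0:ℝ) 1, (1 - x) * x⁻¹ * (Jx u x).toReal :=
    setIntegral_congr_fun measurableSet_Ioo fun x hx => inner_eq hu hx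
  rw [step1]
  have hmeas : Measurable fun x : ℝ => (1 - x) * x⁻¹ * (Jx u x).toReal :=
    ((measurable_const.sub measurable_id).mul measurable_id.inv).mul
      (measurable_Jx u).ennreal_toReal
  rw [integral_eq_lintegral_of_nonneg_ae
    ((ae_restrict_iff' measurableSet_Ioo).2 (ae_of_all _ fun x hx => by
      have h1 : (0:ℝ) < x := hx.1
      have h2 : x < 1 := hx.2
      have h3 : (0:ℝ) ≤ 1 - x := by linarith
      exact mul_nonneg (mul_nonneg h3 (inv_nonneg.mpr h1.le)) ENNReal.toReal_nonneg))
    hmeas.aestronglyMeasurable]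
  have step2 : (∫⁻ x in Ioo (0:ℝ) 1, ENNReal.ofReal ((1 - x) * x⁻¹ * (Jx u x).toReal)) =
      ∫⁻ x in Ioo (0:ℝ) 1, ∫⁻ t in Ioo (0:ℝ) 1, W u (x, t) := by
    apply setLIntegral_congr_fun_ae measurableSet_Ioo (ae_of_all _ fun x hx => ?_)
    rw [W_section_x hx]
    have h1 : (0:ℝ) < x := hx.1
    have h2 : x < 1 := hx.2
    have h3 : (0:ℝ) ≤ (1 - x) * x⁻¹ := by
      have : (0:ℝ) ≤ 1 - x := by linarith
      positivity
    rw [ENNReal.ofReal_mul h3, ENNReal.ofReal_toReal (Jx_ne_top hu hx)]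
  rw [step2]
  have hswap : (∫⁻ x in Ioo (0:ℝ) 1, ∫⁻ t in Ioo (0:ℝ) 1, W u (x, t)) =
      ∫⁻ t in Ioo (0:ℝ) 1, ∫⁻ x in Ioo (0:ℝ) 1, W u (x, t) := by
    apply lintegral_lintegral_swap
    exact (measurable_W u).aemeasurable
  rw [hswap]
  have step3 : (∫⁻ t in Ioo (0:ℝ) 1, ∫⁻ x in Ioo (0:ℝ) 1, W u (x, t)) =
      ∫⁻ t in Ioo (0:ℝ) 1, ENNReal.ofReal (pw u t * hh t) := by
    apply setLIntegral_congr_fun_ae measurableSet_Ioo (ae_of_all _ fun t ht => ?_)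
    rw [W_section_t ht, weight_lintegral ht]
    rw [← ENNReal.ofReal_mul (by
      have hL : Real.log t < 0 := Real.log_neg ht.1 ht.2
      have := Real.log_le_sub_one_of_pos ht.1
      linarith)]
    rw [mul_comm, f0_mul_weight ht.1 ht.2]
  rw [step3]
  rw [← integral_eq_lintegral_of_nonneg_ae
    ((ae_restrict_iff' measurableSet_Ioo).2 (ae_of_all _ fun t ht =>
      mul_nonneg (pw_pos u t).le (hh_nonneg ht.1 ht.2)))
    ((measurable_pw u).mul measurable_hh).aestronglyMeasurable]
  rfl

/-! ### Digamma facts -/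

noncomputable def phi : ℝ → ℝ := Real.log ∘ Real.Gamma

lemma phi_ne {x : ℝ} (hx : 0 < x) : ∀ m : ℕ, x ≠ -(m : ℝ) := by
  intro m
  have : (0:ℝ) ≤ (m : ℝ) := Nat.cast_nonneg m
  intro h
  rw [h] at hx
  linarith

lemma phi_diff {x : ℝ} (hx : 0 < x) : DifferentiableAt ℝ phi x :=
  (Real.differentiableAt_Gamma (phi_ne hx)).log (Real.Gamma_pos_of_pos hx).ne'

lemma phi_rec {x : ℝ} (hx : 0 < x) : phi (x + 1) = phi x + Real.log x := by
  simp only [phi, Function.comp_apply, Real.Gamma_add_one hx.ne',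
    Real.log_mul hx.ne' (Real.Gamma_pos_of_pos hx).ne', add_comm]

lemma deriv_phi_eq {x : ℝ} (hx : 0 < x) :
    deriv phi x = deriv Real.Gamma x / Real.Gamma x := by
  rw [phi, Function.comp_def,
    deriv.log (Real.differentiableAt_Gamma (phi_ne hx)) (Real.Gamma_pos_of_pos hx).ne']

lemma deriv_phi_rec {x : ℝ} (hx : 0 < x) : deriv phi (x + 1) = deriv phi x + 1 / x := by
  rw [← deriv_comp_add_const, one_div, ← Real.deriv_log,
    ← deriv_add (phi_diff hx) (Real.differentiableAt_log hx.ne')]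
  apply Filter.EventuallyEq.deriv_eq
  filter_upwards [eventually_gt_nhds hx] using fun y hy => phi_rec hy

lemma deriv_phi_le_log {x : ℝ} (hx : 0 < x) : deriv phi x ≤ Real.log x := by
  have h := Real.convexOn_log_Gamma.deriv_le_slope (mem_Ioi.mpr hx)
    (mem_Ioi.mpr (by linarith : (0:ℝ) < x + 1)) (by linarith) (phi_diff hx)
  rw [slope_def_field] at h
  calc deriv phi x ≤ (phi (x + 1) - phi x) / (x + 1 - x) := h
  _ = Real.log x := by rw [phi_rec hx]; field_simp; ring

lemma log_le_deriv_phi {x : ℝ} (hx : 1 < x) : Real.log (x - 1) ≤ deriv phi x := by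
  have hx1 : 0 < x - 1 := by linarith
  have h := Real.convexOn_log_Gamma.slope_le_deriv (mem_Ioi.mpr hx1)
    (mem_Ioi.mpr (by linarith : (0:ℝ) < x)) (by linarith) (phi_diff (by linarith))
  rw [slope_def_field] at h
  rw [show Real.log ∘ Real.Gamma = phi from rfl] at h
  refine le_trans (le_of_eq ?_) h
  have : phi x = phi (x - 1) + Real.log (x - 1) := by
    have := phi_rec hx1
    rw [sub_add_cancel] at this
    exact this
  rw [this]
  have hne : x - (x - 1) = 1 := by ring
  rw [hne]
  ring

/-! ### Assembly -/

noncomputable def E (x : ℝ) : ℝ := G x - (Real.log x - deriv phi x)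

lemma E_rec {x : ℝ} (hx : 0 < x) : E (x + 1) = E x := by
  have h1 := G_rec hx
  have h2 := deriv_phi_rec hx
  rw [E, E, h2]
  linarith

lemma E_add_nat (u : ℝ) (hu : 0 < u) : ∀ n : ℕ, E (u + n) = E u := by
  intro n
  induction n with
  | zero => simp
  | succ n ih =>
    have : u + (n + 1 : ℕ) = (u + n) + 1 := by push_cast; ring
    rw [this, E_rec (by positivity), ih]

lemma E_bound {x : ℝ} (hx : 1 < x) : |E x| ≤ 1 / x + 1 / (x - 1) := by
  have hx0 : 0 < x := by linarith
  have hx1 : 0 < x - 1 := by linarith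
  have hG0 := G_nonneg hx0
  have hG1 := G_le hx0
  have hd1 := deriv_phi_le_log hx0
  have hd2 := log_le_deriv_phi hx
  have hlog : Real.log x - Real.log (x - 1) ≤ 1 / (x - 1) := by
    rw [← Real.log_div hx0.ne' hx1.ne']
    have h := Real.log_le_sub_one_of_pos (by positivity : (0:ℝ) < x / (x - 1))
    have : x / (x - 1) - 1 = 1 / (x - 1) := by field_simp; ring
    linarith
  rw [abs_le]
  constructor <;> [skip; skip] <;> rw [E] <;> nlinarith [one_div_pos.mpr hx0]

lemma E_eq_zero (u : ℝ) (hu : 0 < u) : E u = 0 := by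
  have key : ∀ n : ℕ, |E u| ≤ 2 / (u + n) := by
    intro n
    have h1 : E u = E (u + (n + 1 : ℕ)) := (E_add_nat u hu (n + 1)).symm
    have hn0 : (0:ℝ) ≤ (n:ℝ) := Nat.cast_nonneg n
    have hcast : ((n + 1 : ℕ) : ℝ) = (n : ℝ) + 1 := by push_cast; ring
    rw [h1, hcast]
    have hgt : 1 < u + ((n:ℝ) + 1) := by linarith
    have hb := E_bound hgt
    have h2 : u + ((n:ℝ) + 1) - 1 = u + n := by ring
    rw [h2] at hb
    have h3 : 1 / (u + ((n:ℝ) + 1)) ≤ 1 / (u + n) :=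
      one_div_le_one_div_of_le (by positivity) (by linarith)
    have h4 : 2 / (u + (n:ℝ)) = 1 / (u + n) + 1 / (u + n) := by ring
    linarith
  have hlim : Tendsto (fun n : ℕ => 2 / (u + n)) atTop (nhds 0) := by
    apply Filter.Tendsto.div_atTop tendsto_const_nhds
    exact Filter.tendsto_atTop_add_const_left _ _ tendsto_natCast_atTop_atTop
  have h0 : |E u| ≤ 0 := ge_of_tendsto' hlim key
  have := abs_nonneg (E u)
  have : |E u| = 0 := le_antisymm h0 (abs_nonneg _)
  exact abs_eq_zero.mp this

theorem main (u : ℝ) (hu : 0 < u) :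
    (∫ x in (0:ℝ)..1, ∫ y in (0:ℝ)..1,
        (1 - x) * (x * y) ^ (u - 1) / ((1 - x * y) * (-Real.log (x * y)))) =
      Real.log u - deriv Real.Gamma u / Real.Gamma u := by
  rw [lhs_eq_G hu, ← deriv_phi_eq hu]
  have := E_eq_zero u hu
  rw [E] at this
  linarith

end DblIntAux

theorem double_integral_log_sub_digamma (u : ℝ) (hu : 0 < u) :
    (∫ x in (0:ℝ)..1, ∫ y in (0:ℝ)..1,
        (1 - x) * (x * y) ^ (u - 1) / ((1 - x * y) * (-Real.log (x * y)))) =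
      Real.log u - deriv Real.Gamma u / Real.Gamma u := by
  exact DblIntAux.main u hu
end
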